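/- arXiv:2204.12936 — 2 statements merged into one kernel-verified Lean document; each statement's English description precedes it below -/
import Mathlib

section
/- Let π be a permutation of size n, different from the identity, with k left-to-right maxima in total and whose longest suffix of left-to-right maxima has length m. Then for every 0 ≤ j ≤ m, the number of permutations σ at height j in the tree T(π) of iterated bubblesort preimages (i.e., with B^j(σ) = π and B^(j−1)(σ) ≠ π for j ≥ 1) is j!·(j+1)^(k−j). In particular, the total number of nodes of T(π) is ∑_{j=0}^{m} j!·(j+1)^(k−j). -/
/-!
Write a permutation as `σ = c₁ A₁ c₂ A₂ ⋯ c_r A_r`, cut before each left-to-right maximum `cᵢ`.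
One bubblesort pass moves each `cᵢ` past its block: `B(σ) = A₁ c₁ A₂ c₂ ⋯ A_r c_r`. So the
preimages of `π` correspond to the sets `C` of left-to-right maxima of `π` containing its last
entry (cut `π` after each element of `C`), and the preimage `ρ_C` has exactly `|C|`
left-to-right maxima.

Every pass that does not produce the identity lengthens the final run of left-to-right maxima.
Hence `B^j σ = π` forces `j ≤ m`, the height of a node is unique (`B^t π ≠ π` for `t > 0`), and
`ρ_C` has a `j`-th iterated preimage only if its final run has length at least `j`, that is, only
if `C` contains the last `j + 1` entries `T` of `π`. By induction on `j`, the number of nodes at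
height `j + 1` is `∑_{T ⊆ C ⊆ LTR(π)} j!·(j+1)^(|C|-j) = (j+1)!·(j+2)^(k-j-1)`.
-/

/-- One pass of bubblesort on a list of naturals. -/
def bpass : List ℕ → List ℕ
  | [] => []
  | [a] => [a]
  | a :: b :: l => if b < a then b :: bpass (a :: l) else a :: bpass (b :: l)

/-- The identity permutation 1 2 ... n as a list. -/
def idList (n : ℕ) : List ℕ := List.map (· + 1) (List.range n)

/-- `l` is (the word of) a permutation of size `n`, i.e. a rearrangement of 1,...,n. -/
def IsPermList (n : ℕ) (l : List ℕ) : Prop := l.Perm (idList n)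

/-- position `j` of `l` holds a left-to-right maximum. -/
def IsLTRMax (l : List ℕ) (j : ℕ) : Prop :=
  j < l.length ∧ ∀ i < j, l.getD i 0 < l.getD j 0

instance (l : List ℕ) (j : ℕ) : Decidable (IsLTRMax l j) := by
  unfold IsLTRMax; infer_instance

/-- the number of left-to-right maxima of `l`. -/
def ltrCount (l : List ℕ) : ℕ :=
  ((List.range l.length).filter fun j => decide (IsLTRMax l j)).length

/-- the length of the longest suffix of `l` consisting of left-to-right maxima. -/
def suffLen (l : List ℕ) : ℕ :=
  ((List.range l.length).takeWhile fun j => decide (IsLTRMax l (l.length - 1 - j))).length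

/-- `σ` is a node of the tree `T(π)` of iterated bubblesort preimages. -/
def IsNode (n : ℕ) (π σ : List ℕ) : Prop :=
  IsPermList n σ ∧ ∃ j, bpass^[j] σ = π

/-- `σ` is a node of `T(π)` at height `j` (j passes needed to reach π, and no fewer). -/
def IsNodeAt (n : ℕ) (π σ : List ℕ) (j : ℕ) : Prop :=
  IsPermList n σ ∧ bpass^[j] σ = π ∧ ∀ i < j, bpass^[i] σ ≠ π

/-- `τ` is a leaf: it has no child, i.e. no bubblesort preimage other than itself. -/
def IsLeafNode (n : ℕ) (τ : List ℕ) : Prop :=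
  ¬ ∃ ρ, IsPermList n ρ ∧ ρ ≠ τ ∧ bpass ρ = τ

/-- `T(π)` and `T(τ)` are isomorphic as rooted trees: there is a bijection between
their node sets sending root to root and commuting with the parent map `bpass`. -/
def TreeIso (n : ℕ) (π τ : List ℕ) : Prop :=
  ∃ φ : List ℕ → List ℕ,
    (∀ σ, IsNode n π σ → IsNode n τ (φ σ)) ∧
    (∀ σ σ', IsNode n π σ → IsNode n π σ' → φ σ = φ σ' → σ = σ') ∧
    (∀ ρ, IsNode n τ ρ → ∃ σ, IsNode n π σ ∧ φ σ = ρ) ∧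
    φ π = τ ∧
    (∀ σ, IsNode n π σ → σ ≠ π → φ (bpass σ) = bpass (φ σ))

namespace BubbleTree

open List

theorem idList_nodup (n : ℕ) : (idList n).Nodup :=
  nodup_range.map fun _ _ h => Nat.succ_injective h

theorem pairwise_lt_idList (n : ℕ) : (idList n).Pairwise (· < ·) :=
  pairwise_lt_range.map _ fun _ _ h => Nat.succ_lt_succ h

theorem pos_of_mem_idList {n x : ℕ} (h : x ∈ idList n) : 0 < x := by
  obtain ⟨y, -, rfl⟩ := mem_map.1 h
  exact y.succ_pos

theorem eq_idList_of_perm_of_pairwise {n : ℕ} {l : List ℕ} (h : l ~ idList n)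
    (hl : l.Pairwise (· < ·)) : l = idList n :=
  h.eq_of_pairwise' (r := (· ≤ ·)) (hl.imp le_of_lt) ((pairwise_lt_idList n).imp le_of_lt)

theorem bpass_perm : ∀ l : List ℕ, bpass l ~ l
  | [] => by rw [bpass]
  | [_] => by rw [bpass]
  | a :: b :: l => by
    unfold bpass
    split
    · exact ((bpass_perm (a :: l)).cons b).trans (.swap a b l)
    · exact (bpass_perm (b :: l)).cons a
termination_by l => l.length

theorem bpass_eq_self_of_pairwise : ∀ l : List ℕ, l.Pairwise (· < ·) → bpass l = l
  | [], _ => by rw [bpass]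
  | [_], _ => by rw [bpass]
  | a :: b :: l, h => by
    have hab : a < b := rel_of_pairwise_cons h mem_cons_self
    rw [bpass, if_neg (by omega), bpass_eq_self_of_pairwise (b :: l) h.of_cons]

theorem bpass_idList (n : ℕ) : bpass (idList n) = idList n :=
  bpass_eq_self_of_pairwise _ (pairwise_lt_idList n)

theorem iterate_bpass_perm {n : ℕ} {σ : List ℕ} (h : σ ~ idList n) (t : ℕ) :
    bpass^[t] σ ~ idList n := by
  induction t with
  | zero => exact h
  | succ t ih => exact Function.iterate_succ_apply' bpass t σ ▸ (bpass_perm _).trans ih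

/-- The threshold `a` acts as an extra entry in front of `l`: `ltrMaxs a l` lists the
left-to-right maxima of `l` above `a`, and `ltrSuffix a l` is the length of the longest run of
them at the end of `l`. -/
def ltrMaxs : ℕ → List ℕ → List ℕ
  | _, [] => []
  | a, b :: l => if a < b then b :: ltrMaxs b l else ltrMaxs a l

def ltrSuffix : ℕ → List ℕ → ℕ
  | _, [] => 0
  | a, b :: l =>
    if a < b then (if ltrSuffix b l = l.length then l.length + 1 else ltrSuffix b l)
    else ltrSuffix a l

theorem ltrMaxs_sublist (a : ℕ) (l : List ℕ) : ltrMaxs a l <+ l := by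
  induction l generalizing a with
  | nil => exact .slnil
  | cons b l ih =>
    rw [ltrMaxs]
    split_ifs
    · exact (ih b).cons_cons b
    · exact (ih a).cons b

theorem lt_of_mem_ltrMaxs {a x : ℕ} {l : List ℕ} (h : x ∈ ltrMaxs a l) : a < x := by
  induction l generalizing a with
  | nil => simp [ltrMaxs] at h
  | cons b l ih =>
    rw [ltrMaxs] at h
    split_ifs at h with hab
    · rcases mem_cons.1 h with rfl | h
      exacts [hab, hab.trans (ih h)]
    · exact ih h

theorem mem_ltrMaxs_of_mem_cons {a x y : ℕ} {l : List ℕ} (h : y ∈ ltrMaxs a (x :: l))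
    (hy : y ≠ x) : y ∈ ltrMaxs (max a x) l := by
  rw [ltrMaxs] at h
  split_ifs at h with hax
  · rw [max_eq_right hax.le]
    exact (mem_cons.1 h).resolve_left hy
  · rwa [max_eq_left (not_lt.1 hax)]

theorem ltrMaxs_append_of_lt {c : ℕ} {A : List ℕ} (hA : ∀ x ∈ A, x < c) (w : List ℕ) :
    ltrMaxs c (A ++ w) = ltrMaxs c w := by
  induction A with
  | nil => rfl
  | cons x A ih =>
    rw [cons_append, ltrMaxs, if_neg (not_lt.2 (hA x mem_cons_self).le),
      ih fun y hy => hA y (mem_cons_of_mem _ hy)]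

theorem cons_ltrMaxs_sublist_append {a c : ℕ} {u : List ℕ} (hu : ∀ x ∈ u, x < c) (ha : a < c)
    (w : List ℕ) : c :: ltrMaxs c w <+ ltrMaxs a (u ++ c :: w) := by
  induction u generalizing a with
  | nil => rw [nil_append, ltrMaxs, if_pos ha]
  | cons x u ih =>
    have hu' : ∀ y ∈ u, y < c := fun y hy => hu y (mem_cons_of_mem _ hy)
    rw [cons_append, ltrMaxs]
    split_ifs with hax
    · exact (ih hu' (hu x mem_cons_self)).cons x
    · exact ih hu' ha

theorem ltrSuffix_le_length (a : ℕ) (l : List ℕ) : ltrSuffix a l ≤ l.length := by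
  induction l generalizing a with
  | nil => exact le_rfl
  | cons b l ih =>
    have := ih a
    have := ih b
    rw [ltrSuffix, length_cons]
    split_ifs <;> omega

theorem ltrSuffix_cons_of_lt {a c : ℕ} (h : a < c) (w : List ℕ) :
    ltrSuffix a (c :: w) = if ltrSuffix c w = w.length then w.length + 1 else ltrSuffix c w := by
  rw [ltrSuffix, if_pos h]

theorem ltrSuffix_append_of_lt {c : ℕ} {A : List ℕ} (hA : ∀ x ∈ A, x < c) (w : List ℕ) :
    ltrSuffix c (A ++ w) = ltrSuffix c w := by
  induction A with
  | nil => rfl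
  | cons x A ih =>
    rw [cons_append, ltrSuffix, if_neg (not_lt.2 (hA x mem_cons_self).le),
      ih fun y hy => hA y (mem_cons_of_mem _ hy)]

theorem ltrSuffix_max_le_cons (a b : ℕ) (l : List ℕ) :
    ltrSuffix (max a b) l ≤ ltrSuffix a (b :: l) := by
  rcases lt_or_ge a b with hab | hab
  · rw [max_eq_right hab.le, ltrSuffix_cons_of_lt hab]
    have := ltrSuffix_le_length b l
    split_ifs <;> omega
  · rw [max_eq_left hab, ltrSuffix, if_neg (not_lt.2 hab)]

/-- Inserting entries below `c` in front of `c` keeps the status of `c` and of every entry after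
it, so the suffix of left-to-right maxima can only grow. -/
theorem ltrSuffix_le_append_cons {a c : ℕ} {u : List ℕ} (hu : ∀ x ∈ u, x < c) (ha : a < c)
    (w : List ℕ) : ltrSuffix a (c :: w) ≤ ltrSuffix a (u ++ c :: w) := by
  induction u generalizing a with
  | nil => exact le_rfl
  | cons x u ih =>
    have hax : max a x < c := max_lt ha (hu x mem_cons_self)
    calc ltrSuffix a (c :: w) = ltrSuffix (max a x) (c :: w) := by
          rw [ltrSuffix_cons_of_lt ha, ltrSuffix_cons_of_lt hax]
      _ ≤ ltrSuffix (max a x) (u ++ c :: w) := ih (fun y hy => hu y (mem_cons_of_mem _ hy)) hax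
      _ ≤ ltrSuffix a (x :: u ++ c :: w) := ltrSuffix_max_le_cons a x _

theorem ltrSuffix_of_isChain {a : ℕ} {l : List ℕ} (h : IsChain (· < ·) (a :: l)) :
    ltrSuffix a l = l.length := by
  induction l generalizing a with
  | nil => rfl
  | cons b l ih =>
    obtain ⟨hab, h⟩ := isChain_cons_cons.1 h
    rw [ltrSuffix_cons_of_lt hab, if_pos (ih h), length_cons]

theorem rtake_cons_of_le {t : ℕ} (x : ℕ) {l : List ℕ} (h : t ≤ l.length) :
    (x :: l).rtake t = l.rtake t := by
  simp only [rtake, length_cons, Nat.sub_add_comm h, drop_succ_cons]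

theorem rtake_of_length_le {t : ℕ} {l : List ℕ} (h : l.length ≤ t) : l.rtake t = l := by
  rw [rtake, Nat.sub_eq_zero_of_le h, drop_zero]

theorem card_toFinset_rtake {l : List ℕ} (hl : l.Nodup) {t : ℕ} (ht : t ≤ l.length) :
    (l.rtake t).toFinset.card = t := by
  rw [rtake, toFinset_card_of_nodup (hl.sublist (drop_sublist _ _)), length_drop]
  omega

theorem getLast?_rtake (l : List ℕ) {t : ℕ} (ht : t ≠ 0) : (l.rtake t).getLast? = l.getLast? := by
  rw [rtake_eq_reverse_take_reverse, getLast?_reverse, head?_take, if_neg ht, head?_reverse]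

theorem rtake_subset_ltrMaxs {a t : ℕ} {l : List ℕ} (h : t ≤ ltrSuffix a l) :
    l.rtake t ⊆ ltrMaxs a l := by
  induction l generalizing a t with
  | nil => simp [rtake]
  | cons b l ih =>
    have hle := ltrSuffix_le_length a (b :: l)
    have hsub : ltrMaxs (max a b) l ⊆ ltrMaxs a (b :: l) := by
      rw [ltrMaxs]
      split_ifs with hab
      · rw [max_eq_right hab.le]
        exact subset_cons_self _ _
      · rw [max_eq_left (not_lt.1 hab)]
        exact Subset.refl _
    have := ltrSuffix_le_length a l
    have := ltrSuffix_le_length b l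
    rw [length_cons] at hle
    rcases Nat.lt_or_ge l.length t with hlt | htl
    · obtain rfl : t = l.length + 1 := by omega
      rw [ltrSuffix] at h
      split_ifs at h with hab hfull <;> try omega
      have hl : l ⊆ ltrMaxs b l := by
        simpa only [rtake_of_length_le le_rfl] using ih (t := l.length) hfull.ge
      rw [rtake_of_length_le (by rw [length_cons]), ltrMaxs, if_pos hab]
      exact cons_subset_cons _ hl
    · have ht : t ≤ ltrSuffix (max a b) l := by
        rcases lt_or_ge a b with hab | hab
        · rw [ltrSuffix_cons_of_lt hab] at h
          rw [max_eq_right hab.le]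
          split_ifs at h <;> omega
        · rwa [ltrSuffix, if_neg (not_lt.2 hab), ← max_eq_left hab] at h
      rw [rtake_cons_of_le b htl]
      exact Subset.trans (ih ht) hsub

theorem isLTRMax_cons_zero (b : ℕ) (l : List ℕ) : IsLTRMax (b :: l) 0 :=
  ⟨by simp, fun _ hi => absurd hi (Nat.not_lt_zero _)⟩

theorem isLTRMax_cons_succ {b j : ℕ} {l : List ℕ} :
    IsLTRMax (b :: l) (j + 1) ↔ b < l.getD j 0 ∧ IsLTRMax l j := by
  simp only [IsLTRMax, length_cons, Nat.forall_lt_succ_left, getD_cons_zero, getD_cons_succ,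
    Nat.add_lt_add_iff_right]
  tauto

theorem isLTRMax_cons_cons_succ {a b j : ℕ} {l : List ℕ} :
    IsLTRMax (a :: b :: l) (j + 2) ↔ IsLTRMax (max a b :: l) (j + 1) := by
  simp only [isLTRMax_cons_succ, getD_cons_succ, max_lt_iff, and_assoc]

theorem isLTRMax_cons_cons_one {a b : ℕ} {l : List ℕ} : IsLTRMax (a :: b :: l) 1 ↔ a < b := by
  simp [isLTRMax_cons_succ, isLTRMax_cons_zero]

theorem decide_isLTRMax_cons_cons_comp_succ (a b : ℕ) (l : List ℕ) :
    (fun j => decide (IsLTRMax (a :: b :: l) (j + 1))) ∘ Nat.succ =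
      fun j => decide (IsLTRMax (max a b :: l) (j + 1)) :=
  funext fun _ => decide_eq_decide.2 isLTRMax_cons_cons_succ

theorem length_filter_isLTRMax_cons (a : ℕ) (l : List ℕ) :
    ((range l.length).filter fun j => decide (IsLTRMax (a :: l) (j + 1))).length =
      (ltrMaxs a l).length := by
  induction l generalizing a with
  | nil => rfl
  | cons b l ih =>
    have hhead : IsLTRMax (a :: b :: l) (0 + 1) ↔ a < b := isLTRMax_cons_cons_one
    rw [length_cons, range_succ_eq_map, filter_cons, filter_map,
      decide_isLTRMax_cons_cons_comp_succ, ltrMaxs]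
    rcases lt_or_ge a b with hab | hab
    · simp [hhead.2 hab, hab, max_eq_right hab.le, ih]
    · simp [hhead, not_lt.2 hab, max_eq_left hab, ih]

theorem length_takeWhile_isLTRMax_cons (a : ℕ) (l : List ℕ) :
    ((range l.length).reverse.takeWhile fun j => decide (IsLTRMax (a :: l) (j + 1))).length =
      ltrSuffix a l := by
  induction l generalizing a with
  | nil => rfl
  | cons b l ih =>
    have hhead : IsLTRMax (a :: b :: l) (0 + 1) ↔ a < b := isLTRMax_cons_cons_one
    rw [length_cons, range_succ_eq_map, reverse_cons, ← map_reverse, takeWhile_append,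
      takeWhile_map, decide_isLTRMax_cons_cons_comp_succ, length_map, length_map, length_reverse,
      length_range, ih]
    rcases lt_or_ge a b with hab | hab
    · rw [ltrSuffix_cons_of_lt hab, max_eq_right hab.le]
      split_ifs <;> simp [hhead.2 hab, *]
    · rw [ltrSuffix, if_neg (not_lt.2 hab), max_eq_left hab]
      split_ifs <;> simp [not_lt.2 hab, *]

theorem isLTRMax_iff_cons_zero {l : List ℕ} (hl : ∀ x ∈ l, 0 < x) (j : ℕ) :
    IsLTRMax l j ↔ IsLTRMax (0 :: l) (j + 1) := by
  rw [isLTRMax_cons_succ, iff_and_self]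
  intro h
  exact hl _ (getD_eq_getElem l 0 h.1 ▸ getElem_mem h.1)

theorem ltrCount_eq_length_ltrMaxs {l : List ℕ} (hl : ∀ x ∈ l, 0 < x) :
    ltrCount l = (ltrMaxs 0 l).length := by
  rw [← length_filter_isLTRMax_cons, ltrCount]
  simp only [isLTRMax_iff_cons_zero hl]

theorem suffLen_eq_ltrSuffix {l : List ℕ} (hl : ∀ x ∈ l, 0 < x) :
    suffLen l = ltrSuffix 0 l := by
  have hrev : (range l.length).reverse = (range l.length).map (l.length - 1 - ·) := by
    rw [range_eq_range', reverse_range', ← range_eq_range']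
    simp
  rw [← length_takeWhile_isLTRMax_cons, suffLen, hrev, takeWhile_map, length_map]
  simp only [isLTRMax_iff_cons_zero hl]
  rfl


/-- A pair `(c, A)` is a block with head `c` and tail `A`. `IsBlocks a D` says that the word
`joinHeadFirst D = c₁ A₁ ⋯ c_r A_r` is cut exactly at its left-to-right maxima above `a`. -/
def IsBlocks : ℕ → List (ℕ × List ℕ) → Prop
  | _, [] => True
  | a, (c, A) :: D => a < c ∧ (∀ x ∈ A, x < c) ∧ IsBlocks c D

def joinHeadFirst : List (ℕ × List ℕ) → List ℕ
  | [] => []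
  | (c, A) :: D => c :: (A ++ joinHeadFirst D)

def joinHeadLast : List (ℕ × List ℕ) → List ℕ
  | [] => []
  | (c, A) :: D => A ++ c :: joinHeadLast D

def trailingEmptyTails : List (ℕ × List ℕ) → ℕ
  | [] => 0
  | (_, A) :: D =>
    if A = [] ∧ trailingEmptyTails D = D.length then D.length + 1 else trailingEmptyTails D

theorem trailingEmptyTails_le_length (D : List (ℕ × List ℕ)) :
    trailingEmptyTails D ≤ D.length := by
  induction D with
  | nil => exact le_rfl
  | cons p D ih =>
    rw [trailingEmptyTails, length_cons]
    split_ifs <;> omega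

theorem trailingEmptyTails_eq_length_iff {D : List (ℕ × List ℕ)} :
    trailingEmptyTails D = D.length ↔ ∀ p ∈ D, p.2 = [] := by
  induction D with
  | nil => simp [trailingEmptyTails]
  | cons p D ih =>
    obtain ⟨c, A⟩ := p
    have := trailingEmptyTails_le_length D
    rw [trailingEmptyTails, length_cons, forall_mem_cons, ← ih]
    split_ifs with h
    · simpa using h
    · exact ⟨fun _ => by omega, fun h' => absurd h' h⟩

theorem joinHeadFirst_of_tails_nil {D : List (ℕ × List ℕ)} (h : ∀ p ∈ D, p.2 = []) :
    joinHeadFirst D = D.map Prod.fst := by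
  induction D with
  | nil => rfl
  | cons p D ih =>
    obtain ⟨c, A⟩ := p
    obtain ⟨hA, hD⟩ := forall_mem_cons.1 h
    obtain rfl : A = [] := hA
    rw [joinHeadFirst, nil_append, ih hD, map_cons]

theorem joinHeadLast_of_tails_nil {D : List (ℕ × List ℕ)} (h : ∀ p ∈ D, p.2 = []) :
    joinHeadLast D = D.map Prod.fst := by
  induction D with
  | nil => rfl
  | cons p D ih =>
    obtain ⟨c, A⟩ := p
    obtain ⟨hA, hD⟩ := forall_mem_cons.1 h
    obtain rfl : A = [] := hA
    rw [joinHeadLast, nil_append, ih hD, map_cons]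

theorem length_le_length_joinHeadFirst (D : List (ℕ × List ℕ)) :
    D.length ≤ (joinHeadFirst D).length := by
  induction D with
  | nil => exact le_rfl
  | cons p D ih =>
    rw [joinHeadFirst, length_cons, length_cons, length_append]
    omega

theorem joinHeadFirst_perm_joinHeadLast (D : List (ℕ × List ℕ)) :
    joinHeadFirst D ~ joinHeadLast D := by
  induction D with
  | nil => exact .nil
  | cons p D ih => exact ((ih.append_left p.2).cons p.1).trans perm_middle.symm

theorem map_fst_subset_joinHeadLast (D : List (ℕ × List ℕ)) :
    D.map Prod.fst ⊆ joinHeadLast D := by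
  induction D with
  | nil => exact Subset.refl _
  | cons p D ih =>
    rw [map_cons, joinHeadLast]
    exact cons_subset.2 ⟨mem_append_right _ mem_cons_self,
      Subset.trans (Subset.trans ih (subset_cons_self _ _)) (subset_append_right _ _)⟩

theorem getLast?_joinHeadLast (D : List (ℕ × List ℕ)) :
    (joinHeadLast D).getLast? = (D.map Prod.fst).getLast? := by
  induction D with
  | nil => rfl
  | cons p D ih =>
    rw [joinHeadLast, getLast?_append_of_ne_nil _ (cons_ne_nil _ _), getLast?_cons, ih,
      map_cons, getLast?_cons]

theorem isChain_of_isBlocks {a : ℕ} {D : List (ℕ × List ℕ)} (h : IsBlocks a D) :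
    IsChain (· < ·) (a :: D.map Prod.fst) := by
  induction D generalizing a with
  | nil => exact isChain_singleton a
  | cons p D ih => exact isChain_cons_cons.2 ⟨h.1, ih h.2.2⟩

theorem bpass_cons_append_of_lt {c : ℕ} {A : List ℕ} (hA : ∀ x ∈ A, x < c) (r : List ℕ) :
    bpass (c :: (A ++ r)) = A ++ bpass (c :: r) := by
  induction A with
  | nil => rfl
  | cons x A ih =>
    rw [cons_append, bpass, if_pos (hA x mem_cons_self), ih fun y hy => hA y (mem_cons_of_mem _ hy),
      cons_append]

theorem bpass_cons_joinHeadFirst {c : ℕ} {D : List (ℕ × List ℕ)} (h : IsBlocks c D) :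
    bpass (c :: joinHeadFirst D) = c :: bpass (joinHeadFirst D) := by
  match D, h with
  | [], _ => simp [joinHeadFirst, bpass]
  | (c', A) :: D, h => rw [joinHeadFirst, bpass, if_neg (not_lt.2 h.1.le)]

theorem bpass_joinHeadFirst {a : ℕ} {D : List (ℕ × List ℕ)} (h : IsBlocks a D) :
    bpass (joinHeadFirst D) = joinHeadLast D := by
  induction D generalizing a with
  | nil => simp [joinHeadFirst, joinHeadLast, bpass]
  | cons p D ih =>
    obtain ⟨c, A⟩ := p
    obtain ⟨-, hA, hD⟩ := h
    rw [joinHeadFirst, joinHeadLast, bpass_cons_append_of_lt hA, bpass_cons_joinHeadFirst hD,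
      ih hD]

theorem ltrMaxs_joinHeadFirst {a : ℕ} {D : List (ℕ × List ℕ)} (h : IsBlocks a D) :
    ltrMaxs a (joinHeadFirst D) = D.map Prod.fst := by
  induction D generalizing a with
  | nil => rfl
  | cons p D ih =>
    obtain ⟨c, A⟩ := p
    obtain ⟨hac, hA, hD⟩ := h
    rw [joinHeadFirst, ltrMaxs, if_pos hac, ltrMaxs_append_of_lt hA, ih hD, map_cons]

theorem ltrSuffix_joinHeadFirst {a : ℕ} {D : List (ℕ × List ℕ)} (h : IsBlocks a D) :
    ltrSuffix a (joinHeadFirst D) = trailingEmptyTails D := by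
  induction D generalizing a with
  | nil => rfl
  | cons p D ih =>
    obtain ⟨c, A⟩ := p
    obtain ⟨hac, hA, hD⟩ := h
    have hle := trailingEmptyTails_le_length D
    have hlen := length_le_length_joinHeadFirst D
    have hfull : trailingEmptyTails D = D.length → (joinHeadFirst D).length = D.length :=
      fun h => by rw [joinHeadFirst_of_tails_nil (trailingEmptyTails_eq_length_iff.1 h), length_map]
    rw [joinHeadFirst, ltrSuffix_cons_of_lt hac, ltrSuffix_append_of_lt hA, ih hD,
      trailingEmptyTails, length_append]
    by_cases hA : A = []
    · subst hA
      simp only [length_nil, zero_add, true_and]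
      by_cases hD : trailingEmptyTails D = D.length
      · rw [if_pos (hD.trans (hfull hD).symm), if_pos hD, hfull hD]
      · rw [if_neg hD, if_neg (by omega)]
    · have : A.length ≠ 0 := by simpa using hA
      simp only [hA, false_and, if_false]
      split_ifs <;> omega

theorem map_fst_subset_ltrMaxs_joinHeadLast {a : ℕ} {D : List (ℕ × List ℕ)} (h : IsBlocks a D) :
    D.map Prod.fst ⊆ ltrMaxs a (joinHeadLast D) := by
  induction D generalizing a with
  | nil => exact Subset.refl _
  | cons p D ih =>
    obtain ⟨c, A⟩ := p
    obtain ⟨hac, hA, hD⟩ := h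
    exact Subset.trans (cons_subset_cons c (ih hD)) (cons_ltrMaxs_sublist_append hA hac _).subset

/-- One pass lengthens the final run of left-to-right maxima: the head of the last block with a
nonempty tail joins the trailing run of heads. -/
theorem trailingEmptyTails_lt_ltrSuffix_joinHeadLast {a : ℕ} {D : List (ℕ × List ℕ)}
    (h : IsBlocks a D) (hD : trailingEmptyTails D ≠ D.length) :
    trailingEmptyTails D < ltrSuffix a (joinHeadLast D) := by
  induction D generalizing a with
  | nil => exact absurd rfl hD
  | cons p D ih =>
    obtain ⟨c, A⟩ := p
    obtain ⟨hac, hA, hDb⟩ := h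
    refine lt_of_lt_of_le ?_ (ltrSuffix_le_append_cons hA hac _)
    rw [ltrSuffix_cons_of_lt hac]
    rw [trailingEmptyTails] at hD ⊢
    rw [length_cons] at hD
    by_cases hfull : trailingEmptyTails D = D.length
    · have htails := trailingEmptyTails_eq_length_iff.1 hfull
      have hchain : ltrSuffix c (joinHeadLast D) = (joinHeadLast D).length := by
        rw [joinHeadLast_of_tails_nil htails]
        exact ltrSuffix_of_isChain (isChain_of_isBlocks hDb)
      rw [if_pos hchain, joinHeadLast_of_tails_nil htails, length_map]
      split_ifs at hD ⊢ <;> omega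
    · have := ih hDb hfull
      split_ifs <;> omega

theorem exists_isBlocks : ∀ {a : ℕ} {l : List ℕ}, l.Nodup → (∀ x ∈ l.head?, a < x) →
    ∃ D, IsBlocks a D ∧ joinHeadFirst D = l
  | _, [], _, _ => ⟨[], trivial, rfl⟩
  | a, b :: l, hnd, ha => by
    obtain ⟨hbl, hnd⟩ := nodup_cons.1 hnd
    have hsub := dropWhile_sublist (l := l) (· < b)
    have hhead : ∀ y ∈ (l.dropWhile (· < b)).head?, b < y := by
      intro y hy
      have hyb := head?_dropWhile_not (· < b) l
      rw [Option.mem_def.1 hy] at hyb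
      have hyl : y ∈ l := hsub.subset (mem_of_mem_head? hy)
      have : y ≠ b := fun h => hbl (h ▸ hyl)
      simp only [decide_eq_false_iff_not, not_lt] at hyb
      omega
    obtain ⟨D, hD, hjoin⟩ := exists_isBlocks (hsub.nodup hnd) hhead
    refine ⟨(b, l.takeWhile (· < b)) :: D,
      ⟨ha b rfl, fun x hx => by simpa using mem_takeWhile_imp hx, hD⟩, ?_⟩
    rw [joinHeadFirst, hjoin, takeWhile_append_dropWhile]
termination_by _ l => l.length
decreasing_by exact Nat.lt_succ_of_le hsub.length_le

theorem ltrSuffix_lt_ltrSuffix_bpass {n : ℕ} {ρ : List ℕ} (hρ : ρ ~ idList n)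
    (hne : ρ ≠ idList n) : ltrSuffix 0 ρ < ltrSuffix 0 (bpass ρ) := by
  obtain ⟨D, hD, rfl⟩ := exists_isBlocks (a := 0) (hρ.nodup_iff.2 (idList_nodup n))
    fun x hx => pos_of_mem_idList (hρ.subset (mem_of_mem_head? hx))
  rw [ltrSuffix_joinHeadFirst hD, bpass_joinHeadFirst hD]
  refine trailingEmptyTails_lt_ltrSuffix_joinHeadLast hD fun hfull => hne ?_
  apply eq_idList_of_perm_of_pairwise hρ
  rw [joinHeadFirst_of_tails_nil (trailingEmptyTails_eq_length_iff.1 hfull)]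
  exact (isChain_iff_pairwise.1 (isChain_of_isBlocks hD)).of_cons

theorem le_ltrSuffix_iterate_bpass {n : ℕ} {σ : List ℕ} (hσ : σ ~ idList n) {t : ℕ}
    (ht : bpass^[t] σ ≠ idList n) : t ≤ ltrSuffix 0 (bpass^[t] σ) := by
  induction t with
  | zero => exact Nat.zero_le _
  | succ t ih =>
    rw [Function.iterate_succ_apply'] at ht ⊢
    have hne : bpass^[t] σ ≠ idList n := fun h => ht (by rw [h, bpass_idList])
    exact (ih hne).trans_lt (ltrSuffix_lt_ltrSuffix_bpass (iterate_bpass_perm hσ t) hne)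

theorem iterate_bpass_ne_self {n : ℕ} {π : List ℕ} (hπ : π ~ idList n) (hne : π ≠ idList n)
    {t : ℕ} (ht : 0 < t) : bpass^[t] π ≠ π := by
  intro hper
  have hk : bpass^[t * (π.length + 1)] π = π :=
    (Function.IsPeriodicPt.mul_const hper (π.length + 1)).eq
  have hbound := le_ltrSuffix_iterate_bpass hπ (t := t * (π.length + 1)) (by rw [hk]; exact hne)
  rw [hk] at hbound
  have := ltrSuffix_le_length 0 π
  have := Nat.le_mul_of_pos_left (π.length + 1) ht
  omega

theorem eq_of_iterate_bpass_eq {n : ℕ} {π σ : List ℕ} (hπ : π ~ idList n) (hne : π ≠ idList n)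
    {i j : ℕ} (hi : bpass^[i] σ = π) (hj : bpass^[j] σ = π) : i = j := by
  wlog hij : i ≤ j generalizing i j
  · exact (this hj hi (le_of_not_ge hij)).symm
  by_contra h
  refine iterate_bpass_ne_self hπ hne (t := j - i) (by omega) ?_
  nth_rewrite 1 [← hi]
  rw [← Function.iterate_add_apply, Nat.sub_add_cancel hij, hj]

def consTail (x : ℕ) : List (ℕ × List ℕ) → List (ℕ × List ℕ)
  | [] => []
  | (c, A) :: D => (c, x :: A) :: D

/-- Cuts `l` after each entry in `C` into blocks `A c` with `c ∈ C`, so that `joinHeadLast`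
undoes it; entries after the last one in `C` are dropped. -/
def cutAt (C : Finset ℕ) : List ℕ → List (ℕ × List ℕ)
  | [] => []
  | x :: l => if x ∈ C then (x, []) :: cutAt C l else consTail x (cutAt C l)

theorem map_fst_consTail (x : ℕ) (D : List (ℕ × List ℕ)) :
    (consTail x D).map Prod.fst = D.map Prod.fst := by
  match D with
  | [] => rfl
  | (_, _) :: _ => rfl

theorem joinHeadLast_consTail (x : ℕ) {D : List (ℕ × List ℕ)} (hD : D ≠ []) :
    joinHeadLast (consTail x D) = x :: joinHeadLast D := by
  match D, hD with
  | (_, _) :: _, _ => rfl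

theorem isBlocks_consTail {a x : ℕ} {D : List (ℕ × List ℕ)} (h : IsBlocks (max a x) D) :
    IsBlocks a (consTail x D) := by
  match D, h with
  | [], _ => trivial
  | (_, _) :: _, ⟨h₁, h₂, h₃⟩ =>
    exact ⟨(le_max_left a x).trans_lt h₁,
      forall_mem_cons.2 ⟨(le_max_right a x).trans_lt h₁, h₂⟩, h₃⟩

theorem map_fst_cutAt (C : Finset ℕ) (l : List ℕ) :
    (cutAt C l).map Prod.fst = l.filter (· ∈ C) := by
  induction l with
  | nil => rfl
  | cons x l ih =>
    by_cases hx : x ∈ C <;> simp [cutAt, hx, map_fst_consTail, ih]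

theorem length_cutAt_le (C : Finset ℕ) (l : List ℕ) : (cutAt C l).length ≤ l.length := by
  rw [← length_map (f := Prod.fst), map_fst_cutAt]
  exact length_filter_le _ _

theorem cutAt_of_forall_mem {C : Finset ℕ} {l : List ℕ} (h : ∀ x ∈ l, x ∈ C) :
    cutAt C l = l.map fun x => (x, []) := by
  induction l with
  | nil => rfl
  | cons x l ih =>
    obtain ⟨hx, hl⟩ := forall_mem_cons.1 h
    rw [cutAt, if_pos hx, ih hl, map_cons]

theorem joinHeadLast_cutAt {C : Finset ℕ} {l : List ℕ} (h : ∀ c ∈ l.getLast?, c ∈ C) :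
    joinHeadLast (cutAt C l) = l := by
  induction l with
  | nil => rfl
  | cons x l ih =>
    by_cases hl : l = []
    · subst hl
      simp [cutAt, joinHeadLast, h x rfl]
    · obtain ⟨y, l', rfl⟩ := exists_cons_of_ne_nil hl
      rw [getLast?_cons_cons] at h
      have hjoin := ih h
      rw [cutAt]
      split_ifs
      · rw [joinHeadLast, nil_append, hjoin]
      · rw [joinHeadLast_consTail x fun h0 => hl (by rw [← hjoin, h0]; rfl), hjoin]

theorem isBlocks_cutAt {C : Finset ℕ} {a : ℕ} {l : List ℕ} (hl : l.Nodup)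
    (hC : ∀ x ∈ l, x ∈ C → x ∈ ltrMaxs a l) : IsBlocks a (cutAt C l) := by
  induction l generalizing a with
  | nil => trivial
  | cons x l ih =>
    obtain ⟨hxl, hnd⟩ := nodup_cons.1 hl
    have hD := ih hnd fun y hy hyC =>
      mem_ltrMaxs_of_mem_cons (hC y (mem_cons_of_mem _ hy) hyC) fun h => hxl (h ▸ hy)
    rw [cutAt]
    split_ifs with hx
    · have hax : a < x := lt_of_mem_ltrMaxs (hC x mem_cons_self hx)
      rw [max_eq_right hax.le] at hD
      exact ⟨hax, fun _ h => absurd h (not_mem_nil), hD⟩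
    · exact isBlocks_consTail hD

theorem cutAt_append_cons {C : Finset ℕ} {A : List ℕ} {c : ℕ} (hA : ∀ x ∈ A, x ∉ C) (hc : c ∈ C)
    (w : List ℕ) : cutAt C (A ++ c :: w) = (c, A) :: cutAt C w := by
  induction A with
  | nil => rw [nil_append, cutAt, if_pos hc]
  | cons x A ih =>
    rw [cons_append, cutAt, if_neg (hA x mem_cons_self), ih fun y hy => hA y (mem_cons_of_mem _ hy)]
    rfl

theorem cutAt_joinHeadLast {C : Finset ℕ} {D : List (ℕ × List ℕ)} (hnd : (joinHeadLast D).Nodup)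
    (hC : ∀ x ∈ joinHeadLast D, x ∈ C ↔ x ∈ D.map Prod.fst) : cutAt C (joinHeadLast D) = D := by
  induction D with
  | nil => rfl
  | cons p D ih =>
    obtain ⟨c, A⟩ := p
    rw [joinHeadLast] at hnd hC ⊢
    have hdisj := disjoint_of_nodup_append hnd
    obtain ⟨hc, hnd'⟩ := nodup_cons.1 hnd.of_append_right
    have hA : ∀ x ∈ A, x ∉ C := fun x hx hxC => by
      rcases mem_cons.1 ((hC x (mem_append_left _ hx)).1 hxC) with rfl | h
      · exact hdisj hx mem_cons_self
      · exact hdisj hx (mem_cons_of_mem _ (map_fst_subset_joinHeadLast D h))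
    have hcC : c ∈ C := (hC c (mem_append_right _ mem_cons_self)).2 mem_cons_self
    rw [cutAt_append_cons hA hcC, ih hnd' fun x hx => ?_]
    rw [hC x (mem_append_right _ (mem_cons_of_mem _ hx)), map_cons, mem_cons]
    exact or_iff_right fun h => hc (by simp only at h; exact h ▸ hx)

theorem forall_mem_of_trailingEmptyTails_cutAt_eq_length {C : Finset ℕ} {l : List ℕ}
    (hjoin : joinHeadLast (cutAt C l) = l)
    (h : trailingEmptyTails (cutAt C l) = (cutAt C l).length) : ∀ x ∈ l, x ∈ C := by
  have hl := hjoin.symm.trans (joinHeadLast_of_tails_nil (trailingEmptyTails_eq_length_iff.1 h))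
  rw [map_fst_cutAt] at hl
  simpa using filter_eq_self.1 hl.symm

theorem exists_cutAt_eq_cons {C : Finset ℕ} {l : List ℕ} (hjoin : joinHeadLast (cutAt C l) = l)
    (hl : l ≠ []) : ∃ c A D, cutAt C l = (c, A) :: D := by
  obtain ⟨⟨c, A⟩, D, hD⟩ : ∃ p D, cutAt C l = p :: D :=
    exists_cons_of_ne_nil fun h0 => hl (by rw [← hjoin, h0]; rfl)
  exact ⟨c, A, D, hD⟩

theorem le_trailingEmptyTails_cutAt_cons_iff {C : Finset ℕ} {x j : ℕ} {l : List ℕ}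
    (hjoin : joinHeadLast (cutAt C l) = l) (hj : j < l.length) :
    j ≤ trailingEmptyTails (cutAt C (x :: l)) ↔ j ≤ trailingEmptyTails (cutAt C l) := by
  obtain ⟨c, A, D, hD⟩ := exists_cutAt_eq_cons hjoin (ne_nil_of_length_pos (by omega))
  have hfull : trailingEmptyTails (cutAt C l) = (cutAt C l).length →
      (cutAt C l).length = l.length := fun h => by
    rw [cutAt_of_forall_mem (forall_mem_of_trailingEmptyTails_cutAt_eq_length hjoin h), length_map]
  rw [hD, length_cons] at hfull
  rw [cutAt, hD]
  split_ifs with hx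
  · rw [trailingEmptyTails, length_cons]
    split_ifs with h
    · have := hfull h.2
      omega
    · exact Iff.rfl
  · change j ≤ trailingEmptyTails ((c, x :: A) :: D) ↔ _
    rw [trailingEmptyTails, if_neg (by simp), trailingEmptyTails]
    split_ifs with h
    · have := hfull (by rw [trailingEmptyTails, if_pos h])
      omega
    · exact Iff.rfl

theorem length_le_trailingEmptyTails_cutAt_cons_iff {C : Finset ℕ} {x : ℕ} {l : List ℕ}
    (hjoin : joinHeadLast (cutAt C l) = l) (hl : l ≠ []) :
    l.length ≤ trailingEmptyTails (cutAt C (x :: l)) ↔ ∀ y ∈ x :: l, y ∈ C := by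
  refine ⟨fun h => ?_, fun h => ?_⟩
  · obtain ⟨c, A, D, hD⟩ := exists_cutAt_eq_cons hjoin hl
    have hlen := length_cutAt_le C l
    have hle := trailingEmptyTails_le_length ((c, A) :: D)
    have hle' := trailingEmptyTails_le_length D
    rw [hD, length_cons] at hlen
    rw [length_cons] at hle
    rw [cutAt, hD] at h
    split_ifs at h with hx
    · rw [trailingEmptyTails, length_cons] at h
      split_ifs at h with hc
      · exact forall_mem_cons.2
          ⟨hx, forall_mem_of_trailingEmptyTails_cutAt_eq_length hjoin (hD ▸ hc.2)⟩
      · simp only [true_and] at hc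
        omega
    · change l.length ≤ trailingEmptyTails ((c, x :: A) :: D) at h
      rw [trailingEmptyTails, if_neg (by simp)] at h
      omega
  · rw [cutAt_of_forall_mem h, trailingEmptyTails_eq_length_iff.2 (by simp), length_map,
      length_cons]
    omega

theorem le_trailingEmptyTails_cutAt_iff {C : Finset ℕ} {j : ℕ} {l : List ℕ}
    (hlast : ∀ c ∈ l.getLast?, c ∈ C) (hj : j + 1 ≤ l.length) :
    j ≤ trailingEmptyTails (cutAt C l) ↔ ∀ x ∈ l.rtake (j + 1), x ∈ C := by
  induction l generalizing j with
  | nil => simp at hj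
  | cons x l ih =>
    by_cases hl : l = []
    · subst hl
      obtain rfl : j = 0 := by simpa using hj
      simpa [rtake] using hlast x rfl
    have hlast' : ∀ c ∈ l.getLast?, c ∈ C := by
      obtain ⟨y, l', rfl⟩ := exists_cons_of_ne_nil hl
      rwa [getLast?_cons_cons] at hlast
    have hjoin := joinHeadLast_cutAt hlast'
    rw [length_cons] at hj
    rcases Nat.lt_or_ge j l.length with hjl | hjl
    · rw [le_trailingEmptyTails_cutAt_cons_iff hjoin hjl, ih hlast' hjl, rtake_cons_of_le x hjl]
    · obtain rfl : j = l.length := by omega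
      rw [length_le_trailingEmptyTails_cutAt_cons_iff hjoin hl, rtake_of_length_le (by simp)]

def perms (n : ℕ) : Finset (List ℕ) := (idList n).permutations.toFinset

theorem mem_perms {n : ℕ} {σ : List ℕ} : σ ∈ perms n ↔ σ ~ idList n := by
  simp [perms]

def iterPreimage (n j : ℕ) (π : List ℕ) : Finset (List ℕ) := {σ ∈ perms n | bpass^[j] σ = π}

theorem mem_iterPreimage {n j : ℕ} {π σ : List ℕ} :
    σ ∈ iterPreimage n j π ↔ σ ~ idList n ∧ bpass^[j] σ = π := by
  rw [iterPreimage, Finset.mem_filter, mem_perms]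

theorem card_iterPreimage_succ (n j : ℕ) (π : List ℕ) :
    (iterPreimage n (j + 1) π).card = ∑ ρ ∈ iterPreimage n 1 π, (iterPreimage n j ρ).card := by
  classical
  have hmaps : ∀ σ ∈ iterPreimage n (j + 1) π, bpass^[j] σ ∈ iterPreimage n 1 π := by
    intro σ hσ
    simp only [mem_iterPreimage, Function.iterate_one] at hσ ⊢
    exact ⟨iterate_bpass_perm hσ.1 j, by rw [← Function.iterate_succ_apply' bpass j σ, hσ.2]⟩
  rw [Finset.card_eq_sum_card_fiberwise hmaps]
  refine Finset.sum_congr rfl fun ρ hρ => congrArg Finset.card ?_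
  rw [mem_iterPreimage, Function.iterate_one] at hρ
  ext σ
  simp only [Finset.mem_filter, mem_iterPreimage, Function.iterate_succ_apply']
  exact ⟨fun h => ⟨h.1.1, h.2⟩, fun h => ⟨⟨h.1, by rw [h.2, hρ.2]⟩, h.2⟩⟩

section Preimages

variable {n c₀ : ℕ} {π : List ℕ} {C : Finset ℕ}

def cutSets (π : List ℕ) (c₀ : ℕ) : Finset (Finset ℕ) :=
  {C ∈ (ltrMaxs 0 π).toFinset.powerset | c₀ ∈ C}

theorem isBlocks_cutAt_of_mem_cutSets (hπ : π ~ idList n) (hC : C ∈ cutSets π c₀) :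
    IsBlocks 0 (cutAt C π) := by
  simp only [cutSets, Finset.mem_filter, Finset.mem_powerset] at hC
  exact isBlocks_cutAt (hπ.nodup_iff.2 (idList_nodup n)) fun x _ hx => mem_toFinset.1 (hC.1 hx)

theorem forall_mem_getLast?_of_mem_cutSets (hlast : π.getLast? = some c₀)
    (hC : C ∈ cutSets π c₀) : ∀ c ∈ π.getLast?, c ∈ C := fun c hc => by
  rw [hlast, Option.mem_some_iff] at hc
  exact hc ▸ (Finset.mem_filter.1 hC).2

theorem joinHeadFirst_cutAt_mem_iterPreimage (hπ : π ~ idList n) (hlast : π.getLast? = some c₀)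
    (hC : C ∈ cutSets π c₀) : joinHeadFirst (cutAt C π) ∈ iterPreimage n 1 π := by
  have hjoin := joinHeadLast_cutAt (forall_mem_getLast?_of_mem_cutSets hlast hC)
  rw [mem_iterPreimage, Function.iterate_one,
    bpass_joinHeadFirst (isBlocks_cutAt_of_mem_cutSets hπ hC), hjoin]
  exact ⟨(joinHeadFirst_perm_joinHeadLast _).trans (by rw [hjoin]; exact hπ), rfl⟩

theorem ltrMaxs_joinHeadFirst_cutAt (hπ : π ~ idList n) (hC : C ∈ cutSets π c₀) :
    (ltrMaxs 0 (joinHeadFirst (cutAt C π))).toFinset = C := by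
  rw [ltrMaxs_joinHeadFirst (isBlocks_cutAt_of_mem_cutSets hπ hC), map_fst_cutAt]
  simp only [cutSets, Finset.mem_filter, Finset.mem_powerset] at hC
  ext x
  simp only [mem_toFinset, mem_filter, decide_eq_true_eq, and_iff_right_iff_imp]
  exact fun hx => (ltrMaxs_sublist 0 π).subset (mem_toFinset.1 (hC.1 hx))

theorem length_ltrMaxs_joinHeadFirst_cutAt (hπ : π ~ idList n) (hC : C ∈ cutSets π c₀) :
    (ltrMaxs 0 (joinHeadFirst (cutAt C π))).length = C.card := by
  have hnd : (ltrMaxs 0 (joinHeadFirst (cutAt C π))).Nodup := by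
    rw [ltrMaxs_joinHeadFirst (isBlocks_cutAt_of_mem_cutSets hπ hC), map_fst_cutAt]
    exact (hπ.nodup_iff.2 (idList_nodup n)).filter _
  rw [← toFinset_card_of_nodup hnd, ltrMaxs_joinHeadFirst_cutAt hπ hC]

theorem le_ltrSuffix_joinHeadFirst_cutAt_iff (hπ : π ~ idList n) (hlast : π.getLast? = some c₀)
    (hC : C ∈ cutSets π c₀) {j : ℕ} (hj : j + 1 ≤ π.length) :
    j ≤ ltrSuffix 0 (joinHeadFirst (cutAt C π)) ↔ (π.rtake (j + 1)).toFinset ⊆ C := by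
  rw [ltrSuffix_joinHeadFirst (isBlocks_cutAt_of_mem_cutSets hπ hC),
    le_trailingEmptyTails_cutAt_iff (forall_mem_getLast?_of_mem_cutSets hlast hC) hj]
  simp [Finset.subset_iff]

/-- The preimages of `π` under one pass are the words `c₁ A₁ ⋯ c_r A_r` for the cuts
`π = A₁ c₁ ⋯ A_r c_r` at the sets in `cutSets π c₀`. -/
theorem sum_iterPreimage_one (hπ : π ~ idList n) (hlast : π.getLast? = some c₀)
    (f : List ℕ → ℕ) :
    ∑ ρ ∈ iterPreimage n 1 π, f ρ = ∑ C ∈ cutSets π c₀, f (joinHeadFirst (cutAt C π)) := by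
  have hblocks : ∀ ρ ∈ iterPreimage n 1 π, ∃ D, IsBlocks 0 D ∧ joinHeadFirst D = ρ ∧
      joinHeadLast D = π := fun ρ hρ => by
    simp only [mem_iterPreimage, Function.iterate_one] at hρ
    obtain ⟨D, hD, rfl⟩ := exists_isBlocks (a := 0) (hρ.1.nodup_iff.2 (idList_nodup n))
      fun x hx => pos_of_mem_idList (hρ.1.subset (mem_of_mem_head? hx))
    exact ⟨D, hD, rfl, (bpass_joinHeadFirst hD).symm.trans hρ.2⟩
  have hsection : ∀ ρ ∈ iterPreimage n 1 π,
      joinHeadFirst (cutAt (ltrMaxs 0 ρ).toFinset π) = ρ := fun ρ hρ => by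
    obtain ⟨D, hD, rfl, rfl⟩ := hblocks ρ hρ
    rw [ltrMaxs_joinHeadFirst hD, cutAt_joinHeadLast (hπ.nodup_iff.2 (idList_nodup n))
      fun x _ => mem_toFinset]
  refine Finset.sum_nbij' (fun ρ => (ltrMaxs 0 ρ).toFinset) (fun C => joinHeadFirst (cutAt C π))
    (fun ρ hρ => ?_) (fun C hC => joinHeadFirst_cutAt_mem_iterPreimage hπ hlast hC)
    hsection (fun C hC => ltrMaxs_joinHeadFirst_cutAt hπ hC) fun ρ hρ => by rw [hsection ρ hρ]
  obtain ⟨D, hD, rfl, rfl⟩ := hblocks ρ hρ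
  simp only [cutSets, Finset.mem_filter, Finset.mem_powerset, ltrMaxs_joinHeadFirst hD]
  refine ⟨fun x hx => mem_toFinset.2 (map_fst_subset_ltrMaxs_joinHeadLast hD (mem_toFinset.1 hx)),
    mem_toFinset.2 (mem_of_getLast? ?_)⟩
  rw [← getLast?_joinHeadLast, hlast]

end Preimages

theorem iterPreimage_eq_empty {n j : ℕ} {τ : List ℕ} (hτ : τ ≠ idList n)
    (hj : ltrSuffix 0 τ < j) : iterPreimage n j τ = ∅ :=
  Finset.eq_empty_of_forall_notMem fun σ hσ => by
    obtain ⟨hperm, rfl⟩ := mem_iterPreimage.1 hσ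
    exact (le_ltrSuffix_iterate_bpass hperm hτ).not_gt hj

theorem sum_Icc_pow_card_sub {T M : Finset ℕ} (hTM : T ⊆ M) (x : ℕ) :
    ∑ C ∈ Finset.Icc T M, x ^ (C.card - T.card) = (x + 1) ^ (M.card - T.card) := by
  rw [Finset.Icc_eq_image_powerset hTM, Finset.sum_image fun U hU V hV h => ?_,
    ← Finset.card_sdiff_of_subset hTM, ← Finset.sum_pow_mul_eq_add_pow]
  · refine Finset.sum_congr rfl fun U hU => ?_
    rw [Finset.card_union_of_disjoint (Finset.disjoint_of_subset_right (Finset.mem_powerset.1 hU)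
      Finset.disjoint_sdiff), one_pow, mul_one, Nat.add_sub_cancel_left]
  · have hU := Finset.mem_powerset.1 hU
    have hV := Finset.mem_powerset.1 hV
    rw [← Finset.union_sdiff_cancel_left (Finset.disjoint_of_subset_right hU Finset.disjoint_sdiff),
      h, Finset.union_sdiff_cancel_left (Finset.disjoint_of_subset_right hV Finset.disjoint_sdiff)]

theorem ne_idList_of_bpass_eq {n : ℕ} {ρ π : List ℕ} (h : bpass ρ = π) (hne : π ≠ idList n) :
    ρ ≠ idList n := by
  rintro rfl
  exact hne (h ▸ bpass_idList n)

theorem card_iterPreimage {n : ℕ} {π : List ℕ} (hπ : π ~ idList n) (hne : π ≠ idList n) {j : ℕ}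
    (hj : j ≤ ltrSuffix 0 π) :
    (iterPreimage n j π).card = j.factorial * (j + 1) ^ ((ltrMaxs 0 π).length - j) := by
  induction j generalizing π with
  | zero =>
    have : iterPreimage n 0 π = {π} := by
      ext σ
      rw [mem_iterPreimage, Function.iterate_zero_apply, Finset.mem_singleton]
      exact ⟨And.right, fun h => ⟨h ▸ hπ, h⟩⟩
    simp [this]
  | succ j ih =>
    have hnd : π.Nodup := hπ.nodup_iff.2 (idList_nodup n)
    have hlen : j + 1 ≤ π.length := hj.trans (ltrSuffix_le_length 0 π)
    obtain ⟨c₀, hlast⟩ : ∃ c₀, π.getLast? = some c₀ :=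
      Option.isSome_iff_exists.1 (getLast?_isSome.2 (ne_nil_of_length_pos (by omega)))
    set M := (ltrMaxs 0 π).toFinset
    set T := (π.rtake (j + 1)).toFinset
    have hTcard : T.card = j + 1 := card_toFinset_rtake hnd hlen
    have hTM : T ⊆ M := fun x hx => mem_toFinset.2 (rtake_subset_ltrMaxs hj (mem_toFinset.1 hx))
    have hIcc : Finset.Icc T M ⊆ cutSets π c₀ := fun C hC => by
      have hc₀ : c₀ ∈ T :=
        mem_toFinset.2 (mem_of_getLast? (by rw [getLast?_rtake π (by omega), hlast]))
      rw [Finset.mem_Icc] at hC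
      exact Finset.mem_filter.2 ⟨Finset.mem_powerset.2 hC.2, hC.1 hc₀⟩
    have hρ : ∀ C ∈ cutSets π c₀, joinHeadFirst (cutAt C π) ~ idList n ∧
        joinHeadFirst (cutAt C π) ≠ idList n := fun C hC => by
      obtain ⟨hperm, hbpass⟩ :=
        mem_iterPreimage.1 (joinHeadFirst_cutAt_mem_iterPreimage hπ hlast hC)
      exact ⟨hperm, ne_idList_of_bpass_eq hbpass hne⟩
    rw [card_iterPreimage_succ, sum_iterPreimage_one hπ hlast]
    calc ∑ C ∈ cutSets π c₀, (iterPreimage n j (joinHeadFirst (cutAt C π))).card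
        = ∑ C ∈ Finset.Icc T M, j.factorial * (j + 1) * (j + 1) ^ (C.card - T.card) := by
          refine (Finset.sum_subset hIcc fun C hC hCT => ?_).symm.trans
            (Finset.sum_congr rfl fun C hC => ?_)
          · refine Finset.card_eq_zero.2 (iterPreimage_eq_empty (hρ C hC).2 (not_le.1 fun h => ?_))
            exact hCT (Finset.mem_Icc.2
              ⟨(le_ltrSuffix_joinHeadFirst_cutAt_iff hπ hlast hC hlen).1 h,
                Finset.mem_powerset.1 (Finset.mem_filter.1 hC).1⟩)
          · have hTC := (Finset.mem_Icc.1 hC).1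
            have hcard := Finset.card_le_card hTC
            rw [ih (hρ C (hIcc hC)).1 (hρ C (hIcc hC)).2
              ((le_ltrSuffix_joinHeadFirst_cutAt_iff hπ hlast (hIcc hC) hlen).2 hTC),
              length_ltrMaxs_joinHeadFirst_cutAt hπ (hIcc hC), mul_assoc, ← pow_succ']
            congr 2
            omega
      _ = (j + 1).factorial * (j + 2) ^ ((ltrMaxs 0 π).length - (j + 1)) := by
          rw [← Finset.mul_sum, sum_Icc_pow_card_sub hTM, hTcard,
            toFinset_card_of_nodup (hnd.sublist (ltrMaxs_sublist 0 π)), Nat.factorial_succ]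
          ring

theorem setOf_isNodeAt_eq {n : ℕ} {π : List ℕ} (hπ : π ~ idList n) (hne : π ≠ idList n)
    (j : ℕ) : {σ | IsNodeAt n π σ j} = ↑(iterPreimage n j π) := by
  ext σ
  simp only [IsNodeAt, IsPermList, Set.mem_ofPred_eq, Finset.mem_coe, mem_iterPreimage]
  exact ⟨fun h => ⟨h.1, h.2.1⟩, fun h => ⟨h.1, h.2, fun i hi hi' =>
    hi.ne (eq_of_iterate_bpass_eq hπ hne hi' h.2)⟩⟩

theorem setOf_isNode_eq {n : ℕ} {π : List ℕ} (hne : π ≠ idList n) :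
    {σ | IsNode n π σ} =
      ↑((Finset.range (ltrSuffix 0 π + 1)).biUnion (iterPreimage n · π)) := by
  ext σ
  simp only [IsNode, IsPermList, Set.mem_ofPred_eq, Finset.coe_biUnion, Finset.mem_coe,
    Finset.mem_range, Set.mem_iUnion, mem_iterPreimage, exists_prop]
  refine ⟨fun ⟨hσ, j, hj⟩ => ⟨j, ?_, hσ, hj⟩, fun ⟨j, _, hσ, hj⟩ => ⟨hσ, j, hj⟩⟩
  have := le_ltrSuffix_iterate_bpass hσ (t := j) (hj ▸ hne)
  rw [hj] at this
  omega

theorem pairwiseDisjoint_iterPreimage {n : ℕ} {π : List ℕ} (hπ : π ~ idList n)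
    (hne : π ≠ idList n) (s : Finset ℕ) : (s : Set ℕ).PairwiseDisjoint (iterPreimage n · π) :=
  fun _ _ _ _ hij => Finset.disjoint_left.2 fun _ hi hj =>
    hij (eq_of_iterate_bpass_eq hπ hne (mem_iterPreimage.1 hi).2 (mem_iterPreimage.1 hj).2)

end BubbleTree

/-- For `π ≠ id_n` with `k` left-to-right maxima and longest suffix of left-to-right
maxima of length `m`: for every `0 ≤ j ≤ m` the number of nodes at height `j` in `T(π)`
is `j!·(j+1)^(k-j)`, and the total number of nodes of `T(π)` is
`∑_{j=0}^{m} j!·(j+1)^(k-j)`. -/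
theorem stmt_17 (n k m : ℕ) (π : List ℕ) (hπ : IsPermList n π) (hne : π ≠ idList n)
    (hk : ltrCount π = k) (hm : suffLen π = m) :
    (∀ j ≤ m, Set.ncard {σ : List ℕ | IsNodeAt n π σ j} =
      Nat.factorial j * (j + 1) ^ (k - j)) ∧
    Set.ncard {σ : List ℕ | IsNode n π σ} =
      ∑ j ∈ Finset.range (m + 1), Nat.factorial j * (j + 1) ^ (k - j) := by
  have hpos : ∀ x ∈ π, 0 < x := fun _ hx => BubbleTree.pos_of_mem_idList (hπ.subset hx)
  rw [BubbleTree.ltrCount_eq_length_ltrMaxs hpos] at hk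
  rw [BubbleTree.suffLen_eq_ltrSuffix hpos] at hm
  subst hk hm
  refine ⟨fun j hj => ?_, ?_⟩
  · rw [BubbleTree.setOf_isNodeAt_eq hπ hne, Set.ncard_coe_finset,
      BubbleTree.card_iterPreimage hπ hne hj]
  · rw [BubbleTree.setOf_isNode_eq hne, Set.ncard_coe_finset,
      Finset.card_biUnion (BubbleTree.pairwiseDisjoint_iterPreimage hπ hne _)]
    exact Finset.sum_congr rfl fun j hj =>
      BubbleTree.card_iterPreimage hπ hne (Nat.lt_succ_iff.1 (Finset.mem_range.1 hj))
end

section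
/- Let π be a permutation of size n, different from the identity, with k left-to-right maxima and whose longest suffix of left-to-right maxima has length m ≥ 1. Then the number of leaves of the tree T(π) of iterated bubblesort preimages is ∑_{j=1}^{m−1} j!·j·(j+1)^(k−j−1) + m!·(m+1)^(k−m). Moreover, the number of leaves at height j is j!·j·(j+1)^(k−j−1) for 1 ≤ j < m, and m!·(m+1)^(k−m) for j = m. -/
/-!
If `M` is the maximum of `x ++ M :: y`, one pass of bubblesort gives `bpass x ++ y ++ [M]`.
Hence a word not ending with its maximum (`suffLen = 0`) has no preimage, and the preimages of
`γ ++ [M]` under `j + 1` passes are the words `x ++ M :: τ.drop p` with `τ` a preimage of `γ`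
under `j` passes and `bpass x = τ.take p`.

Weight a preimage `τ` by `b ^ ltrCount τ`; inserting `M` adds one left-to-right maximum.
Summing over `x` and then over the prefixes `τ.take p` turns the decomposition into a
recursion in `j` that replaces `b` by `b + 1`. Its solution involves the rising factorial
`b (b + 1) ⋯ (b + j - 1)` and shows that there are no preimages beyond height `m`; in
particular `π` is not periodic under `bpass`, so heights in `T(π)` are well defined. The
leaves are the nodes not ending with their maximum, and `b = 1` counts them.
-/

theorem bpass_cons_cons (a b : ℕ) (l : List ℕ) :
    bpass (a :: b :: l) = if b < a then b :: bpass (a :: l) else a :: bpass (b :: l) := by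
  rw [bpass]

theorem bpass_perm (l : List ℕ) : (bpass l).Perm l := by
  induction l using bpass.induct with
  | case1 => simp [bpass]
  | case2 a => simp [bpass]
  | case3 a b l h ih =>
    rw [bpass_cons_cons, if_pos h]
    exact (ih.cons b).trans (List.Perm.swap a b l)
  | case4 a b l h ih =>
    rw [bpass_cons_cons, if_neg h]
    exact ih.cons a

theorem bpass_length (l : List ℕ) : (bpass l).length = l.length :=
  (bpass_perm l).length_eq

theorem bpass_iterate_perm (j : ℕ) (l : List ℕ) : (bpass^[j] l).Perm l := by
  induction j generalizing l with
  | zero => rfl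
  | succ j ih => exact (ih (bpass l)).trans (bpass_perm l)

theorem bpass_cons_of_forall_lt {M : ℕ} {y : List ℕ} (hy : ∀ a ∈ y, a < M) :
    bpass (M :: y) = y ++ [M] := by
  induction y with
  | nil => rw [bpass]; rfl
  | cons b y ih =>
    rw [bpass_cons_cons, if_pos (hy b (by simp)), ih fun a ha => hy a (by simp [ha])]
    rfl

theorem bpass_append_cons_of_forall_lt {x y : List ℕ} {M : ℕ}
    (hx : ∀ a ∈ x, a < M) (hy : ∀ a ∈ y, a < M) :
    bpass (x ++ M :: y) = bpass x ++ y ++ [M] := by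
  induction x using bpass.induct with
  | case1 => simpa [bpass] using bpass_cons_of_forall_lt hy
  | case2 a =>
    rw [List.singleton_append, bpass_cons_cons, if_neg (by have := hx a (by simp); omega),
      bpass_cons_of_forall_lt hy]
    simp [bpass]
  | case3 a b l h ih =>
    rw [List.cons_append, List.cons_append, bpass_cons_cons, if_pos h, bpass_cons_cons, if_pos h,
      ← List.cons_append, ih fun c hc => hx c (by grind)]
    rfl
  | case4 a b l h ih =>
    rw [List.cons_append, List.cons_append, bpass_cons_cons, if_neg h, bpass_cons_cons,
      if_neg h, ← List.cons_append, ih fun c hc => hx c (by grind)]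
    rfl

theorem bpass_iterate_append_singleton (j : ℕ) {z : List ℕ} {M : ℕ} (hz : ∀ a ∈ z, a < M) :
    bpass^[j] (z ++ [M]) = bpass^[j] z ++ [M] := by
  induction j generalizing z with
  | zero => rfl
  | succ j ih =>
    have hpass : bpass (z ++ [M]) = bpass z ++ [M] := by
      simpa using bpass_append_cons_of_forall_lt hz (y := []) (by simp)
    rw [Function.iterate_succ_apply, Function.iterate_succ_apply, hpass,
      ih fun a ha => hz a ((bpass_perm z).subset ha)]

theorem bpass_iterate_succ_append_cons (j : ℕ) {x y : List ℕ} {M : ℕ}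
    (hx : ∀ a ∈ x, a < M) (hy : ∀ a ∈ y, a < M) :
    bpass^[j + 1] (x ++ M :: y) = bpass^[j] (bpass x ++ y) ++ [M] := by
  rw [Function.iterate_succ_apply, bpass_append_cons_of_forall_lt hx hy,
    bpass_iterate_append_singleton]
  simp only [List.mem_append]
  rintro a (ha | ha)
  exacts [hx a ((bpass_perm x).subset ha), hy a ha]

theorem exists_eq_append_cons_forall_lt {l : List ℕ} (hl : l.Nodup) (hne : l ≠ []) :
    ∃ x M y, l = x ++ M :: y ∧ (∀ a ∈ x, a < M) ∧ (∀ a ∈ y, a < M) := by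
  have hle : ∀ a ∈ l, a ≤ l.max hne := (List.max_le_iff hne).mp le_rfl
  obtain ⟨x, y, hxy⟩ := List.append_of_mem (l.max_mem hne)
  have hM : l.max hne ∉ x ++ y := by
    rw [hxy, List.nodup_middle, List.nodup_cons] at hl
    exact hl.1
  refine ⟨x, l.max hne, y, hxy, fun a ha => ?_, fun a ha => ?_⟩ <;>
    refine lt_of_le_of_ne (hle a (by rw [hxy]; simp [ha])) fun h => hM ?_ <;> simp [← h, ha]

theorem isLTRMax_append {l : List ℕ} (l' : List ℕ) {j : ℕ} (hj : j < l.length) :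
    IsLTRMax (l ++ l') j ↔ IsLTRMax l j := by
  have hget : ∀ i ≤ j, (l ++ l').getD i 0 = l.getD i 0 := fun i hi =>
    List.getD_append _ _ _ _ (by omega)
  unfold IsLTRMax
  refine ⟨fun h => ⟨hj, fun i hi => ?_⟩, fun h => ⟨by simp; omega, fun i hi => ?_⟩⟩
  · simpa only [hget i hi.le, hget j le_rfl] using h.2 i hi
  · simpa only [hget i hi.le, hget j le_rfl] using h.2 i hi

theorem isLTRMax_append_singleton_length (l : List ℕ) (a : ℕ) :
    IsLTRMax (l ++ [a]) l.length ↔ ∀ x ∈ l, x < a := by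
  have hlast : (l ++ [a]).getD l.length 0 = a := by simp
  have hget : ∀ i (hi : i < l.length), (l ++ [a]).getD i 0 = l[i] := fun i hi => by
    rw [List.getD_append _ _ _ _ hi, List.getD_eq_getElem _ _ hi]
  simp only [IsLTRMax, List.length_append, List.length_singleton, Nat.lt_add_one, true_and,
    hlast, List.forall_mem_iff_forall_getElem]
  exact ⟨fun h i hi => hget i hi ▸ h i hi, fun h i hi => hget i hi ▸ h i hi⟩

theorem ltrCount_append_singleton (l : List ℕ) (a : ℕ) :
    ltrCount (l ++ [a]) = ltrCount l + if ∀ x ∈ l, x < a then 1 else 0 := by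
  have hprefix : (List.range l.length).filter (fun j => decide (IsLTRMax (l ++ [a]) j)) =
      (List.range l.length).filter (fun j => decide (IsLTRMax l j)) :=
    List.filter_congr fun j hj => by
      rw [decide_eq_decide]; exact isLTRMax_append [a] (List.mem_range.mp hj)
  rw [ltrCount, List.length_append, List.length_singleton, List.range_succ, List.filter_append,
    hprefix, List.length_append, ← ltrCount]
  simp only [List.filter_cons, List.filter_nil, isLTRMax_append_singleton_length,
    decide_eq_true_eq]
  split_ifs <;> rfl

theorem List.takeWhile_congr {α : Type*} {p q : α → Bool} {l : List α}
    (h : ∀ x ∈ l, p x = q x) : l.takeWhile p = l.takeWhile q := by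
  induction l with
  | nil => rfl
  | cons a l ih =>
    simp only [List.takeWhile_cons, h a List.mem_cons_self,
      ih fun x hx => h x (List.mem_cons_of_mem a hx)]

theorem suffLen_append_singleton (l : List ℕ) (a : ℕ) :
    suffLen (l ++ [a]) = if ∀ x ∈ l, x < a then suffLen l + 1 else 0 := by
  have hshift : (List.range l.length).takeWhile
        (fun j => decide (IsLTRMax (l ++ [a]) (l.length + 1 - 1 - (j + 1)))) =
      (List.range l.length).takeWhile (fun j => decide (IsLTRMax l (l.length - 1 - j))) := by
    refine List.takeWhile_congr fun j hj => ?_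
    rw [decide_eq_decide, show l.length + 1 - 1 - (j + 1) = l.length - 1 - j by omega]
    exact isLTRMax_append [a] (by have := List.mem_range.mp hj; omega)
  rw [suffLen, List.length_append, List.length_singleton, List.range_succ_eq_map,
    List.takeWhile_cons, Nat.add_sub_cancel, Nat.sub_zero]
  simp only [isLTRMax_append_singleton_length, decide_eq_true_eq]
  split_ifs
  · rw [List.takeWhile_map, List.length_cons, List.length_map]
    exact congrArg (· + 1) (congrArg List.length hshift)
  · rfl

theorem suffLen_ne_zero_iff {l : List ℕ} :
    suffLen l ≠ 0 ↔ ∃ γ M, l = γ ++ [M] ∧ ∀ x ∈ γ, x < M := by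
  constructor
  · intro h
    rcases List.eq_nil_or_concat l with rfl | ⟨γ, M, rfl⟩
    · exact absurd rfl h
    rw [List.concat_eq_append, suffLen_append_singleton] at *
    by_cases hM : ∀ x ∈ γ, x < M
    · exact ⟨γ, M, rfl, hM⟩
    · exact absurd (if_neg hM) h
  · rintro ⟨γ, M, rfl, hM⟩
    rw [suffLen_append_singleton, if_pos hM]
    exact Nat.succ_ne_zero _

theorem suffLen_append_cons_eq_zero_iff {x y : List ℕ} {M : ℕ} (hx : ∀ a ∈ x, a < M)
    (hy : ∀ a ∈ y, a < M) : suffLen (x ++ M :: y) = 0 ↔ y ≠ [] := by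
  refine ⟨fun h hy => ?_, fun hne => ?_⟩
  · subst hy
    exact suffLen_ne_zero_iff.mpr ⟨x, M, rfl, hx⟩ h
  obtain ⟨y', c, rfl⟩ := (List.eq_nil_or_concat y).resolve_left hne
  have hc := hy c (by simp)
  rw [List.concat_eq_append, ← List.cons_append, ← List.append_assoc,
    suffLen_append_singleton, if_neg fun h => by have := h M (by simp); omega]

theorem ltrCount_append_cons {x y : List ℕ} {M : ℕ} (hx : ∀ a ∈ x, a < M)
    (hy : ∀ a ∈ y, a < M) : ltrCount (x ++ M :: y) = ltrCount x + 1 := by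
  induction y using List.reverseRecOn with
  | nil => rw [ltrCount_append_singleton, if_pos hx]
  | append_singleton y c ih =>
    have hc := hy c (by simp)
    rw [← List.cons_append, ← List.append_assoc, ltrCount_append_singleton,
      ih fun a ha => hy a (by simp [ha]), if_neg fun h => by have := h M (by simp); omega]

theorem ltrCount_pos {l : List ℕ} (hl : l ≠ []) : 0 < ltrCount l :=
  List.length_pos_of_mem (a := 0) <| List.mem_filter.mpr
    ⟨List.mem_range.mpr (List.length_pos_iff.mpr hl),
      decide_eq_true ⟨List.length_pos_iff.mpr hl, fun _ hi => absurd hi (Nat.not_lt_zero _)⟩⟩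

theorem suffLen_le_ltrCount (l : List ℕ) : suffLen l ≤ ltrCount l := by
  induction l using List.reverseRecOn with
  | nil => rfl
  | append_singleton l a ih =>
    rw [suffLen_append_singleton, ltrCount_append_singleton]
    split_ifs <;> omega

theorem pairwise_le_of_ltrCount_eq_suffLen {l : List ℕ} (h : ltrCount l = suffLen l) :
    l.Pairwise (· ≤ ·) := by
  induction l using List.reverseRecOn with
  | nil => simp
  | append_singleton l a ih =>
    rw [suffLen_append_singleton, ltrCount_append_singleton] at h
    by_cases hl : ∀ x ∈ l, x < a
    · rw [if_pos hl, if_pos hl] at h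
      rw [List.pairwise_append]
      exact ⟨ih (by omega), by simp, fun x hx c hc => by
        rw [List.mem_singleton.mp hc]; exact (hl x hx).le⟩
    · have hne : l ≠ [] := fun h => hl (by simp [h])
      rw [if_neg hl, if_neg hl] at h
      have := ltrCount_pos hne
      omega

theorem suffLen_bpass_ne_zero {l : List ℕ} (hl : l.Nodup) (hne : l ≠ []) :
    suffLen (bpass l) ≠ 0 := by
  obtain ⟨x, M, y, rfl, hx, hy⟩ := exists_eq_append_cons_forall_lt hl hne
  rw [bpass_append_cons_of_forall_lt hx hy, suffLen_ne_zero_iff]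
  refine ⟨_, M, rfl, ?_⟩
  simp only [List.mem_append]
  rintro a (ha | ha)
  exacts [hx a ((bpass_perm x).subset ha), hy a ha]

theorem two_le_length_of_suffLen_lt_ltrCount {l : List ℕ} (h : suffLen l < ltrCount l) :
    2 ≤ l.length := by
  rcases l with _ | ⟨a, _ | ⟨b, l⟩⟩
  · exact absurd h (lt_irrefl 0)
  · have hs := suffLen_append_singleton [] a
    have hk := ltrCount_append_singleton [] a
    simp only [List.nil_append, List.not_mem_nil, IsEmpty.forall_iff, implies_true,
      if_true] at hs hk
    exact absurd h (by rw [hs, hk]; exact lt_irrefl _)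
  · simp

def bpassFiber (j : ℕ) (γ : List ℕ) : Finset (List ℕ) :=
  γ.permutations.toFinset.filter fun τ => bpass^[j] τ = γ

theorem mem_bpassFiber {j : ℕ} {τ γ : List ℕ} : τ ∈ bpassFiber j γ ↔ bpass^[j] τ = γ := by
  rw [bpassFiber, Finset.mem_filter, List.mem_toFinset, List.mem_permutations]
  exact ⟨And.right, fun h => ⟨h ▸ (bpass_iterate_perm j τ).symm, h⟩⟩

theorem perm_of_mem_bpassFiber {j : ℕ} {τ γ : List ℕ} (h : τ ∈ bpassFiber j γ) : τ.Perm γ :=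
  mem_bpassFiber.mp h ▸ (bpass_iterate_perm j τ).symm

theorem bpassFiber_zero (γ : List ℕ) : bpassFiber 0 γ = {γ} := by
  ext τ
  rw [mem_bpassFiber, Finset.mem_singleton, Function.iterate_zero_apply]

theorem bpassFiber_eq_empty {j : ℕ} (hj : j ≠ 0) {γ : List ℕ} (hγ : γ.Nodup) (hne : γ ≠ [])
    (h : suffLen γ = 0) : bpassFiber j γ = ∅ := by
  obtain ⟨i, rfl⟩ := Nat.exists_eq_succ_of_ne_zero hj
  refine Finset.eq_empty_of_forall_notMem fun τ hτ => ?_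
  have hperm : (bpass^[i] τ).Perm γ :=
    (bpass_iterate_perm i τ).trans (perm_of_mem_bpassFiber hτ)
  rw [mem_bpassFiber, Function.iterate_succ_apply'] at hτ
  exact suffLen_bpass_ne_zero (hperm.nodup_iff.mpr hγ)
    (fun h => hne (List.Perm.nil_eq (h ▸ hperm)).symm) (hτ ▸ h)

section FiberDecomposition

variable {γ : List ℕ} {M : ℕ}

theorem forall_lt_of_mem_bpassFiber_one_take {τ x : List ℕ} (hτ : ∀ a ∈ τ, a < M) (p : ℕ)
    (hx : x ∈ bpassFiber 1 (τ.take p)) : ∀ a ∈ x, a < M := fun a ha =>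
  hτ a (List.take_subset _ _ ((perm_of_mem_bpassFiber hx).subset ha))

def fiberSplittings (j : ℕ) (γ : List ℕ) : Finset (Σ _ : List ℕ, Σ _ : ℕ, List ℕ) :=
  (bpassFiber j γ).sigma fun τ => (Finset.range (τ.length + 1)).sigma fun p =>
    bpassFiber 1 (τ.take p)

theorem forall_lt_of_mem_fiberSplittings (hM : ∀ a ∈ γ, a < M) {j : ℕ}
    {s : Σ _ : List ℕ, Σ _ : ℕ, List ℕ} (hs : s ∈ fiberSplittings j γ) :
    (∀ a ∈ s.2.2, a < M) ∧ ∀ a ∈ s.1.drop s.2.1, a < M := by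
  simp only [fiberSplittings, Finset.mem_sigma] at hs
  have hτ : ∀ a ∈ s.1, a < M := fun a ha => hM a ((perm_of_mem_bpassFiber hs.1).subset ha)
  exact ⟨forall_lt_of_mem_bpassFiber_one_take hτ _ hs.2.2,
    fun a ha => hτ a (List.drop_subset _ _ ha)⟩

theorem bpassFiber_succ_append_singleton (hM : ∀ a ∈ γ, a < M) (j : ℕ) :
    bpassFiber (j + 1) (γ ++ [M]) =
      (fiberSplittings j γ).image fun s => s.2.2 ++ M :: s.1.drop s.2.1 := by
  ext τ
  rw [Finset.mem_image, mem_bpassFiber]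
  constructor
  · intro hτ
    have hperm : τ.Perm (γ ++ [M]) := hτ ▸ (bpass_iterate_perm _ τ).symm
    obtain ⟨x, y, rfl⟩ :=
      List.append_of_mem (hperm.mem_iff.mpr (List.mem_concat_self (a := M)))
    have hxy : (x ++ y).Perm γ :=
      (List.perm_middle.symm.trans (hperm.trans (List.perm_append_singleton M γ))).cons_inv
    have hx : ∀ a ∈ x, a < M := fun a ha => hM a (hxy.subset (by simp [ha]))
    have hy : ∀ a ∈ y, a < M := fun a ha => hM a (hxy.subset (by simp [ha]))
    rw [bpass_iterate_succ_append_cons j hx hy, List.append_left_inj] at hτ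
    have hlen : (bpass x).length = x.length := bpass_length x
    refine ⟨⟨bpass x ++ y, x.length, x⟩, ?_, by simp [← hlen]⟩
    simp only [fiberSplittings, Finset.mem_sigma, Finset.mem_range, mem_bpassFiber]
    refine ⟨hτ, by simp [hlen], ?_⟩
    rw [← hlen, List.take_left, Function.iterate_one]
  · rintro ⟨s, hs, rfl⟩
    obtain ⟨hx, hy⟩ := forall_lt_of_mem_fiberSplittings hM hs
    obtain ⟨τ, p, x⟩ := s
    simp only [fiberSplittings, Finset.mem_sigma, mem_bpassFiber, Function.iterate_one] at hs
    rw [bpass_iterate_succ_append_cons j hx hy, hs.2.2, List.take_append_drop, hs.1]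

theorem injOn_fiberSplittings (hM : ∀ a ∈ γ, a < M) (j : ℕ) :
    Set.InjOn (fun s : Σ _ : List ℕ, Σ _ : ℕ, List ℕ => s.2.2 ++ M :: s.1.drop s.2.1)
      (fiberSplittings j γ) := by
  rintro s hs s' hs' heq
  obtain ⟨hx, hy⟩ := forall_lt_of_mem_fiberSplittings hM hs
  obtain ⟨x_eq, -, y_eq⟩ := (List.append_cons_inj_of_notMem (fun h => (hx M h).false)
    (fun h => (hy M h).false)).mp heq
  obtain ⟨τ, p, x⟩ := s
  obtain ⟨τ', p', x'⟩ := s'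
  simp only [fiberSplittings, Finset.coe_sigma, Set.mem_sigma_iff, Finset.mem_coe,
    Finset.mem_range, mem_bpassFiber, Function.iterate_one] at hs hs' x_eq y_eq
  subst x_eq
  have hp : p = p' := by
    have h1 := congrArg List.length hs.2.2
    have h2 := congrArg List.length hs'.2.2
    simp only [List.length_take] at h1 h2
    omega
  subst hp
  have hτ : τ = τ' := by
    rw [← List.take_append_drop p τ, ← List.take_append_drop p τ', ← hs.2.2, ← hs'.2.2, y_eq]
  subst hτ
  rfl

theorem sum_bpassFiber_succ_append_singleton (hM : ∀ a ∈ γ, a < M) (j : ℕ)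
    (f : List ℕ → ℕ) :
    ∑ τ ∈ bpassFiber (j + 1) (γ ++ [M]), f τ =
      ∑ τ ∈ bpassFiber j γ, ∑ p ∈ Finset.range (τ.length + 1),
        ∑ x ∈ bpassFiber 1 (τ.take p), f (x ++ M :: τ.drop p) := by
  rw [bpassFiber_succ_append_singleton hM, Finset.sum_image (injOn_fiberSplittings hM j),
    fiberSplittings, Finset.sum_sigma]
  exact Finset.sum_congr rfl fun τ _ => Finset.sum_sigma _ _ _

end FiberDecomposition

theorem bpassFiber_nil (j : ℕ) : bpassFiber j [] = {[]} := by
  ext τ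
  rw [mem_bpassFiber, Finset.mem_singleton]
  refine ⟨fun h => (List.Perm.nil_eq (h ▸ bpass_iterate_perm j τ)).symm, ?_⟩
  rintro rfl
  exact Function.iterate_fixed (by rw [bpass]) j

-- the value of `∑ x ∈ bpassFiber 1 β, b ^ ltrCount x`, see `sum_bpassFiber_one`
def onePassWeight (b : ℕ) (β : List ℕ) : ℕ :=
  if β = [] then 1 else if suffLen β = 0 then 0 else b * (b + 1) ^ (ltrCount β - 1)

theorem onePassWeight_append_singleton (b : ℕ) (γ : List ℕ) (a : ℕ) :
    onePassWeight b (γ ++ [a]) = if ∀ x ∈ γ, x < a then b * (b + 1) ^ ltrCount γ else 0 := by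
  rw [onePassWeight, if_neg (by simp), suffLen_append_singleton, ltrCount_append_singleton]
  split_ifs <;> simp_all

theorem sum_range_onePassWeight_take (b : ℕ) (δ : List ℕ) :
    ∑ p ∈ Finset.range (δ.length + 1), onePassWeight b (δ.take p) = (b + 1) ^ ltrCount δ := by
  induction δ using List.reverseRecOn with
  | nil => simp [onePassWeight, ltrCount]
  | append_singleton l a ih =>
    have hprefix : ∀ p ∈ Finset.range (l.length + 1),
        onePassWeight b ((l ++ [a]).take p) = onePassWeight b (l.take p) := fun p hp =>
      by rw [List.take_append_of_le_length (Nat.lt_succ_iff.mp (Finset.mem_range.mp hp))]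
    rw [List.length_append, List.length_singleton, Finset.sum_range_succ,
      Finset.sum_congr rfl hprefix, ih, List.take_of_length_le (by simp),
      onePassWeight_append_singleton, ltrCount_append_singleton]
    split_ifs <;> ring

theorem sum_range_onePassWeight_take_of_ne_nil (b : ℕ) {δ : List ℕ} (hδ : δ ≠ []) :
    ∑ p ∈ Finset.range δ.length, onePassWeight b (δ.take p) =
      if suffLen δ = 0 then (b + 1) ^ ltrCount δ else (b + 1) ^ (ltrCount δ - 1) := by
  have hsum := sum_range_onePassWeight_take b δ
  rw [Finset.sum_range_succ, List.take_length, onePassWeight, if_neg hδ] at hsum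
  split_ifs at hsum ⊢ with h
  · simpa using hsum
  · obtain ⟨k, hk⟩ := Nat.exists_eq_add_one_of_ne_zero (ltrCount_pos hδ).ne'
    rw [hk, Nat.add_sub_cancel, pow_succ] at hsum
    rw [hk, Nat.add_sub_cancel]
    linarith

theorem sum_bpassFiber_one (b : ℕ) {β : List ℕ} (hβ : β.Nodup) :
    ∑ x ∈ bpassFiber 1 β, b ^ ltrCount x = onePassWeight b β := by
  induction hlen : β.length using Nat.strong_induction_on generalizing β with
  | _ N ih =>
  rcases eq_or_ne β [] with rfl | hne
  · simp [bpassFiber_nil, onePassWeight, ltrCount]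
  by_cases hβ0 : suffLen β = 0
  · rw [bpassFiber_eq_empty one_ne_zero hβ hne hβ0, Finset.sum_empty, onePassWeight,
      if_neg hne, if_pos hβ0]
  obtain ⟨γ, M, rfl, hM⟩ := suffLen_ne_zero_iff.mp hβ0
  have hsplit := sum_bpassFiber_succ_append_singleton hM 0 fun x => b ^ ltrCount x
  rw [zero_add, bpassFiber_zero, Finset.sum_singleton] at hsplit
  have hγ : γ.Nodup := (List.nodup_append.mp hβ).1
  have hterm : ∀ p ∈ Finset.range (γ.length + 1),
      ∑ x ∈ bpassFiber 1 (γ.take p), b ^ ltrCount (x ++ M :: γ.drop p) =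
        b * onePassWeight b (γ.take p) := fun p _ => by
    rw [← ih (γ.take p).length (by simp [← hlen]) ((List.take_sublist p γ).nodup hγ) rfl,
      Finset.mul_sum]
    refine Finset.sum_congr rfl fun x hx => ?_
    rw [ltrCount_append_cons
      (fun a ha => hM a (List.take_subset _ _ ((perm_of_mem_bpassFiber hx).subset ha)))
      (fun a ha => hM a (List.drop_subset _ _ ha)), pow_succ, mul_comm]
  rw [hsplit, Finset.sum_congr rfl hterm, ← Finset.mul_sum, sum_range_onePassWeight_take,
    onePassWeight_append_singleton, if_pos hM]

def endsMaxSum (b j : ℕ) (γ : List ℕ) : ℕ :=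
  ∑ τ ∈ bpassFiber j γ, if suffLen τ = 0 then 0 else b ^ (ltrCount τ - 1)

def leafSum (b j : ℕ) (γ : List ℕ) : ℕ :=
  ∑ τ ∈ bpassFiber j γ, if suffLen τ = 0 then b ^ ltrCount τ else 0

def bpassFiberLeaves (j : ℕ) (γ : List ℕ) : Finset (List ℕ) :=
  (bpassFiber j γ).filter fun τ => suffLen τ = 0

section WeightedCounts

variable {γ : List ℕ} {M : ℕ}

theorem endsMaxSum_succ_append_singleton (b j : ℕ) (hγ : γ.Nodup) (hne : γ ≠ [])
    (hM : ∀ a ∈ γ, a < M) : endsMaxSum b (j + 1) (γ ++ [M]) = b * endsMaxSum (b + 1) j γ := by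
  rw [endsMaxSum, sum_bpassFiber_succ_append_singleton hM, endsMaxSum, Finset.mul_sum]
  refine Finset.sum_congr rfl fun τ hτ => ?_
  have hperm := perm_of_mem_bpassFiber hτ
  have hτM : ∀ a ∈ τ, a < M := fun a ha => hM a (hperm.subset ha)
  have hdrop : ∀ p, ∀ a ∈ τ.drop p, a < M := fun p a ha => hτM a (List.drop_subset _ _ ha)
  have hinner : ∀ p ∈ Finset.range τ.length, ∑ x ∈ bpassFiber 1 (τ.take p),
      (if suffLen (x ++ M :: τ.drop p) = 0 then 0
        else b ^ (ltrCount (x ++ M :: τ.drop p) - 1)) = 0 := fun p hp =>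
    Finset.sum_eq_zero fun x hx => if_pos <|
      (suffLen_append_cons_eq_zero_iff (forall_lt_of_mem_bpassFiber_one_take hτM p hx)
        (hdrop p)).mpr (by simpa using Finset.mem_range.mp hp)
  rw [Finset.sum_range_succ, Finset.sum_eq_zero hinner, zero_add, List.take_length,
    List.drop_length]
  have hτne : τ ≠ [] := fun h => hne (List.Perm.nil_eq (h ▸ hperm)).symm
  have hlast : ∀ x ∈ bpassFiber 1 τ, (if suffLen (x ++ [M]) = 0 then 0
      else b ^ (ltrCount (x ++ [M]) - 1)) = b ^ ltrCount x := fun x hx => by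
    have hx := forall_lt_of_mem_bpassFiber_one_take hτM τ.length (by rwa [List.take_length])
    rw [if_neg (suffLen_ne_zero_iff.mpr ⟨x, M, rfl, hx⟩), ltrCount_append_singleton, if_pos hx,
      Nat.add_sub_cancel]
  rw [Finset.sum_congr rfl hlast, sum_bpassFiber_one b (hperm.nodup_iff.mpr hγ), onePassWeight,
    if_neg hτne, mul_ite, mul_zero]

theorem leafSum_succ_append_singleton (b j : ℕ) (hγ : γ.Nodup) (hne : γ ≠ [])
    (hM : ∀ a ∈ γ, a < M) :
    leafSum b (j + 1) (γ ++ [M]) = b * (endsMaxSum (b + 1) j γ + leafSum (b + 1) j γ) := by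
  rw [leafSum, sum_bpassFiber_succ_append_singleton hM, endsMaxSum, leafSum,
    ← Finset.sum_add_distrib, Finset.mul_sum]
  refine Finset.sum_congr rfl fun τ hτ => ?_
  have hperm := perm_of_mem_bpassFiber hτ
  have hτM : ∀ a ∈ τ, a < M := fun a ha => hM a (hperm.subset ha)
  have hτ : τ.Nodup := hperm.nodup_iff.mpr hγ
  have hτne : τ ≠ [] := fun h => hne (List.Perm.nil_eq (h ▸ hperm)).symm
  have hinner : ∀ p ∈ Finset.range τ.length, ∑ x ∈ bpassFiber 1 (τ.take p),
      (if suffLen (x ++ M :: τ.drop p) = 0 then b ^ ltrCount (x ++ M :: τ.drop p) else 0) =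
        b * onePassWeight b (τ.take p) := fun p hp => by
    rw [← sum_bpassFiber_one b ((List.take_sublist p τ).nodup hτ), Finset.mul_sum]
    refine Finset.sum_congr rfl fun x hx => ?_
    have hx := forall_lt_of_mem_bpassFiber_one_take hτM p hx
    have hd : ∀ a ∈ τ.drop p, a < M := fun a ha => hτM a (List.drop_subset _ _ ha)
    rw [if_pos ((suffLen_append_cons_eq_zero_iff hx hd).mpr
      (by simpa using Finset.mem_range.mp hp)), ltrCount_append_cons hx hd, pow_succ, mul_comm]
  have hlast : ∑ x ∈ bpassFiber 1 τ,
      (if suffLen (x ++ [M]) = 0 then b ^ ltrCount (x ++ [M]) else 0) = 0 :=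
    Finset.sum_eq_zero fun x hx => if_neg <| suffLen_ne_zero_iff.mpr
      ⟨x, M, rfl, forall_lt_of_mem_bpassFiber_one_take hτM τ.length (by rwa [List.take_length])⟩
  rw [Finset.sum_range_succ, Finset.sum_congr rfl hinner, List.take_length, List.drop_length,
    hlast, add_zero, ← Finset.mul_sum, sum_range_onePassWeight_take_of_ne_nil b hτne]
  split_ifs <;> simp

end WeightedCounts

theorem mul_succ_ascFactorial (b j : ℕ) : b * (b + 1).ascFactorial j = b.ascFactorial (j + 1) :=
  (Nat.succ_ascFactorial b j).trans Nat.ascFactorial_succ.symm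

theorem endsMaxSum_eq_and_leafSum_eq (j : ℕ) {γ : List ℕ} (hγ : γ.Nodup)
    (hlt : suffLen γ < ltrCount γ) (b : ℕ) :
    endsMaxSum b j γ = (if j < suffLen γ then
        b.ascFactorial j * (b + j) ^ (ltrCount γ - j - 1) else 0) ∧
    leafSum b j γ = (if j < suffLen γ then b.ascFactorial j * j * (b + j) ^ (ltrCount γ - j - 1)
      else if j = suffLen γ then b.ascFactorial j * (b + j) ^ (ltrCount γ - j) else 0) := by
  induction j generalizing γ b with
  | zero =>
    simp only [endsMaxSum, leafSum, bpassFiber_zero, Finset.sum_singleton, Nat.ascFactorial_zero]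
    rcases Nat.eq_zero_or_pos (suffLen γ) with h | h
    · simp [h]
    · simp [h, h.ne']
  | succ j ih =>
    have hne : γ ≠ [] := by rintro rfl; exact lt_irrefl 0 hlt
    by_cases h0 : suffLen γ = 0
    · simp [endsMaxSum, leafSum, bpassFiber_eq_empty (Nat.succ_ne_zero j) hγ hne h0, h0]
    obtain ⟨γ', M, rfl, hM⟩ := suffLen_ne_zero_iff.mp h0
    have hγ' : γ'.Nodup := (List.nodup_append.mp hγ).1
    rw [suffLen_append_singleton, if_pos hM, ltrCount_append_singleton, if_pos hM] at hlt ⊢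
    have hne' : γ' ≠ [] := by rintro rfl; exact lt_irrefl 1 hlt
    obtain ⟨ihE, ihF⟩ := ih hγ' (by omega) (b + 1)
    rw [endsMaxSum_succ_append_singleton b j hγ' hne' hM,
      leafSum_succ_append_singleton b j hγ' hne' hM, ihE, ihF, ← mul_succ_ascFactorial,
      show b + 1 + j = b + (j + 1) by ring,
      show ltrCount γ' + 1 - (j + 1) = ltrCount γ' - j by omega]
    constructor <;> split_ifs <;> first | omega | ring_nf

theorem card_bpassFiber (j : ℕ) (γ : List ℕ) :
    (bpassFiber j γ).card = endsMaxSum 1 j γ + leafSum 1 j γ := by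
  rw [endsMaxSum, leafSum, ← Finset.sum_add_distrib, Finset.card_eq_sum_ones]
  refine Finset.sum_congr rfl fun τ _ => ?_
  split_ifs <;> simp

theorem leafSum_one (j : ℕ) (γ : List ℕ) : leafSum 1 j γ = (bpassFiberLeaves j γ).card := by
  rw [leafSum, bpassFiberLeaves, Finset.card_filter]
  simp only [one_pow]

theorem bpassFiber_eq_empty_of_suffLen_lt {γ : List ℕ} (hγ : γ.Nodup)
    (hlt : suffLen γ < ltrCount γ) {j : ℕ} (hj : suffLen γ < j) : bpassFiber j γ = ∅ := by
  obtain ⟨hE, hF⟩ := endsMaxSum_eq_and_leafSum_eq j hγ hlt 1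
  rw [← Finset.card_eq_zero, card_bpassFiber, hE, hF, if_neg (by omega), if_neg (by omega),
    if_neg (by omega)]

theorem bpass_iterate_ne_self {γ : List ℕ} (hγ : γ.Nodup) (hlt : suffLen γ < ltrCount γ)
    {d : ℕ} (hd : d ≠ 0) : bpass^[d] γ ≠ γ := by
  intro h
  have hmem : γ ∈ bpassFiber (d * (suffLen γ + 1)) γ :=
    mem_bpassFiber.mpr (Function.IsPeriodicPt.mul_const h _)
  rw [bpassFiber_eq_empty_of_suffLen_lt hγ hlt
    (Nat.lt_of_lt_of_le (Nat.lt_succ_self _) (Nat.le_mul_of_pos_left _ (Nat.pos_of_ne_zero hd)))]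
    at hmem
  exact Finset.notMem_empty γ hmem

theorem eq_of_bpass_iterate_eq {π σ : List ℕ} (hπ : ∀ d ≠ 0, bpass^[d] π ≠ π) {i j : ℕ}
    (hi : bpass^[i] σ = π) (hj : bpass^[j] σ = π) : i = j := by
  wlog hij : i ≤ j generalizing i j
  · exact (this hj hi (by omega)).symm
  obtain ⟨d, rfl⟩ := Nat.exists_eq_add_of_le hij
  by_contra hd
  apply hπ d (by omega)
  calc bpass^[d] π = bpass^[d] (bpass^[i] σ) := by rw [hi]
    _ = π := by rw [← Function.iterate_add_apply, Nat.add_comm, hj]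

theorem IsPermList.nodup {n : ℕ} {l : List ℕ} (h : IsPermList n l) : l.Nodup :=
  h.nodup_iff.mpr <| (List.nodup_range).map fun _ _ => Nat.add_right_cancel

theorem IsPermList.length_eq {n : ℕ} {l : List ℕ} (h : IsPermList n l) : l.length = n := by
  rw [List.Perm.length_eq h, idList, List.length_map, List.length_range]

theorem IsPermList.of_bpass_iterate_eq {n j : ℕ} {π σ : List ℕ} (hπ : IsPermList n π)
    (h : bpass^[j] σ = π) : IsPermList n σ :=
  (h ▸ (bpass_iterate_perm j σ).symm).trans hπ

theorem suffLen_lt_ltrCount {n : ℕ} {π : List ℕ} (hπ : IsPermList n π) (hne : π ≠ idList n) :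
    suffLen π < ltrCount π := by
  refine lt_of_le_of_ne (suffLen_le_ltrCount π) fun h => hne ?_
  refine List.Perm.eq_of_pairwise' (pairwise_le_of_ltrCount_eq_suffLen h.symm) ?_ hπ
  exact List.pairwise_map.mpr <| List.pairwise_le_range.imp fun h => Nat.add_le_add_right h 1

theorem isLeafNode_iff {n : ℕ} {σ : List ℕ} (hσ : IsPermList n σ) (hn : 2 ≤ n) :
    IsLeafNode n σ ↔ suffLen σ = 0 := by
  constructor
  · intro hleaf
    by_contra h
    obtain ⟨γ, M, rfl, hM⟩ := suffLen_ne_zero_iff.mp h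
    obtain ⟨c, γ', rfl⟩ : ∃ c γ', γ = c :: γ' := List.exists_cons_of_ne_nil fun h => by
      have := hσ.length_eq; simp [h] at this; omega
    refine hleaf ⟨M :: c :: γ', (List.perm_append_singleton M _).symm.trans hσ, fun h => ?_,
      bpass_cons_of_forall_lt hM⟩
    have := hM c (by simp)
    simp only [List.cons_append, List.cons.injEq] at h
    omega
  · rintro h0 ⟨ρ, hρ, -, rfl⟩
    have hρne : ρ ≠ [] := fun h => by have := hρ.length_eq; simp [h] at this; omega
    exact suffLen_bpass_ne_zero hρ.nodup hρne h0

section LeavesOfTree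

variable {n : ℕ} {π : List ℕ}

theorem setOf_isNodeAt_isLeafNode (hπ : IsPermList n π) (hne : π ≠ idList n) (j : ℕ) :
    {σ | IsNodeAt n π σ j ∧ IsLeafNode n σ} = ↑(bpassFiberLeaves j π) := by
  have hlt := suffLen_lt_ltrCount hπ hne
  have hn : 2 ≤ n := hπ.length_eq ▸ two_le_length_of_suffLen_lt_ltrCount hlt
  ext σ
  simp only [Set.mem_ofPred_eq, bpassFiberLeaves, Finset.coe_filter, mem_bpassFiber]
  constructor
  · rintro ⟨⟨hσ, hj, -⟩, hleaf⟩
    exact ⟨hj, (isLeafNode_iff hσ hn).mp hleaf⟩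
  · rintro ⟨hj, hleaf⟩
    have hσ := hπ.of_bpass_iterate_eq hj
    refine ⟨⟨hσ, hj, fun i hi h => ?_⟩, (isLeafNode_iff hσ hn).mpr hleaf⟩
    exact hi.ne (eq_of_bpass_iterate_eq (fun _ hd => bpass_iterate_ne_self hπ.nodup hlt hd) h hj)

theorem setOf_isNode_isLeafNode (hπ : IsPermList n π) (hne : π ≠ idList n) :
    {σ | IsNode n π σ ∧ IsLeafNode n σ} =
      ↑((Finset.range (suffLen π + 1)).biUnion fun j => bpassFiberLeaves j π) := by
  have hlt := suffLen_lt_ltrCount hπ hne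
  have hn : 2 ≤ n := hπ.length_eq ▸ two_le_length_of_suffLen_lt_ltrCount hlt
  ext σ
  simp only [Set.mem_ofPred_eq, Finset.coe_biUnion, Finset.coe_range, Set.mem_Iio,
    Set.mem_iUnion, exists_prop, bpassFiberLeaves, Finset.coe_filter, mem_bpassFiber]
  constructor
  · rintro ⟨⟨hσ, j, hj⟩, hleaf⟩
    refine ⟨j, ?_, hj, (isLeafNode_iff hσ hn).mp hleaf⟩
    by_contra hjm
    have hmem : σ ∈ bpassFiber j π := mem_bpassFiber.mpr hj
    rw [bpassFiber_eq_empty_of_suffLen_lt hπ.nodup hlt (by omega)] at hmem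
    exact Finset.notMem_empty σ hmem
  · rintro ⟨j, -, hj, hleaf⟩
    have hσ := hπ.of_bpass_iterate_eq hj
    exact ⟨⟨hσ, j, hj⟩, (isLeafNode_iff hσ hn).mpr hleaf⟩

theorem card_bpassFiberLeaves (hπ : IsPermList n π) (hne : π ≠ idList n) (j : ℕ) :
    (bpassFiberLeaves j π).card = if j < suffLen π then
        j.factorial * j * (j + 1) ^ (ltrCount π - j - 1)
      else if j = suffLen π then j.factorial * (j + 1) ^ (ltrCount π - j) else 0 := by
  rw [← leafSum_one,
    (endsMaxSum_eq_and_leafSum_eq j hπ.nodup (suffLen_lt_ltrCount hπ hne) 1).2,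
    Nat.one_ascFactorial, Nat.add_comm 1 j]

theorem ncard_setOf_isNode_isLeafNode (hπ : IsPermList n π) (hne : π ≠ idList n) :
    {σ | IsNode n π σ ∧ IsLeafNode n σ}.ncard =
      ∑ j ∈ Finset.range (suffLen π + 1), (bpassFiberLeaves j π).card := by
  have hper := fun d (hd : d ≠ 0) =>
    bpass_iterate_ne_self hπ.nodup (suffLen_lt_ltrCount hπ hne) hd
  rw [setOf_isNode_isLeafNode hπ hne, Set.ncard_coe_finset, Finset.card_biUnion]
  intro i _ j _ hij
  refine Finset.disjoint_left.mpr fun σ hi hj => hij ?_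
  simp only [bpassFiberLeaves, Finset.mem_filter, mem_bpassFiber] at hi hj
  exact eq_of_bpass_iterate_eq hper hi.1 hj.1

end LeavesOfTree

theorem stmt_18_general (n k m : ℕ) (π : List ℕ) (hπ : IsPermList n π) (hne : π ≠ idList n)
    (hk : ltrCount π = k) (hm : suffLen π = m) :
    Set.ncard {σ : List ℕ | IsNode n π σ ∧ IsLeafNode n σ} =
      (∑ j ∈ Finset.Icc 1 (m - 1), Nat.factorial j * j * (j + 1) ^ (k - j - 1)) +
        Nat.factorial m * (m + 1) ^ (k - m) ∧
    (∀ j, 1 ≤ j → j < m → Set.ncard {σ : List ℕ | IsNodeAt n π σ j ∧ IsLeafNode n σ} =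
      Nat.factorial j * j * (j + 1) ^ (k - j - 1)) ∧
    Set.ncard {σ : List ℕ | IsNodeAt n π σ m ∧ IsLeafNode n σ} =
      Nat.factorial m * (m + 1) ^ (k - m) := by
  have hcard := card_bpassFiberLeaves hπ hne
  rw [hk, hm] at hcard
  have hlast : (bpassFiberLeaves m π).card = m.factorial * (m + 1) ^ (k - m) := by
    rw [hcard, if_neg (lt_irrefl m), if_pos rfl]
  refine ⟨?_, fun j _ hjm => ?_, ?_⟩
  · rw [ncard_setOf_isNode_isLeafNode hπ hne, hm, Finset.sum_range_succ, hlast]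
    congr 1
    rw [← Finset.sum_subset (s₁ := Finset.Icc 1 (m - 1)) (fun j hj => by simp at hj ⊢; omega)
      fun j hj hj' => by
        rw [hcard, if_pos (Finset.mem_range.mp hj), show j = 0 by simp at hj hj'; omega]; simp]
    exact Finset.sum_congr rfl fun j hj => by
      rw [hcard, if_pos (by simp at hj; omega)]
  · rw [setOf_isNodeAt_isLeafNode hπ hne, Set.ncard_coe_finset, hcard, if_pos hjm]
  · rw [setOf_isNodeAt_isLeafNode hπ hne, Set.ncard_coe_finset, hlast]

/-- For `π ≠ id_n` with `k` left-to-right maxima and longest suffix of left-to-right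
maxima of length `m ≥ 1`: the number of leaves of `T(π)` is
`∑_{j=1}^{m-1} j!·j·(j+1)^(k-j-1) + m!·(m+1)^(k-m)`; moreover the number of leaves at
height `j` is `j!·j·(j+1)^(k-j-1)` for `1 ≤ j < m`, and `m!·(m+1)^(k-m)` for `j = m`. -/
theorem stmt_18 (n k m : ℕ) (π : List ℕ) (hπ : IsPermList n π) (hne : π ≠ idList n)
    (hk : ltrCount π = k) (hm : suffLen π = m) (hm1 : 1 ≤ m) :
    Set.ncard {σ : List ℕ | IsNode n π σ ∧ IsLeafNode n σ} =
      (∑ j ∈ Finset.Icc 1 (m - 1), Nat.factorial j * j * (j + 1) ^ (k - j - 1)) +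
        Nat.factorial m * (m + 1) ^ (k - m) ∧
    (∀ j, 1 ≤ j → j < m → Set.ncard {σ : List ℕ | IsNodeAt n π σ j ∧ IsLeafNode n σ} =
      Nat.factorial j * j * (j + 1) ^ (k - j - 1)) ∧
    Set.ncard {σ : List ℕ | IsNodeAt n π σ m ∧ IsLeafNode n σ} =
      Nat.factorial m * (m + 1) ^ (k - m) :=
  stmt_18_general n k m π hπ hne hk hm
end
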